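/- arXiv:2504.05647 — 6 statements merged into one kernel-verified Lean document; each statement's English description precedes it below -/
import Mathlib

section
/- Let V = {0,1}^N be ordered as binary integers, δ(a,b) the first coordinate where a and b differ, and let a_1 < a_2 < ... < a_r be vertices in V with δ_i = δ(a_i, a_{i+1}). Then the minimum of the sequence δ_1, ..., δ_{r-1} is achieved by a unique index i. -/
/-- The binary-integer (lexicographic) order on `{0,1}^N`. -/
def blt {N : ℕ} (a b : Fin N → Bool) : Prop :=
  ∃ i : Fin N, a i = false ∧ b i = true ∧ ∀ j, j < i → a j = b j

/-- `firstDiff a b` is the minimum index where `a` and `b` differ. -/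
noncomputable def firstDiff {N : ℕ} (a b : Fin N → Bool) : ℕ :=
  sInf {i : ℕ | ∃ h : i < N, a ⟨i, h⟩ ≠ b ⟨i, h⟩}

/-!
Fix the smallest value `m` of the `δ_k`. For every `k`, bit `m` of `a_k` is at most bit `m` of
`a_{k+1}`: they agree when `m < δ_k`, and go from `false` to `true` when `m = δ_k`. So bit `m` is
monotone along the chain, and it can jump from `false` to `true` only once, i.e. `δ_k = m` for at
most one `k`.
-/

section FirstDiff

variable {N : ℕ} {a b : Fin N → Bool}

theorem firstDiff_eq_of_lt {i : Fin N} (hne : a i ≠ b i) (hagree : ∀ j < i, a j = b j) :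
    firstDiff a b = i := by
  have hmem : (i : ℕ) ∈ {k : ℕ | ∃ h : k < N, a ⟨k, h⟩ ≠ b ⟨k, h⟩} := ⟨i.2, hne⟩
  refine le_antisymm (Nat.sInf_le hmem) (le_of_not_gt fun hlt => ?_)
  obtain ⟨hN, hdiff⟩ := Nat.sInf_mem ⟨_, hmem⟩
  exact hdiff (hagree ⟨_, hN⟩ hlt)

theorem blt.exists_firstDiff (h : blt a b) :
    ∃ i : Fin N, (i : ℕ) = firstDiff a b ∧ a i = false ∧ b i = true ∧ ∀ j < i, a j = b j := by
  obtain ⟨i, hf, ht, hagree⟩ := h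
  exact ⟨i, (firstDiff_eq_of_lt (by simp [hf, ht]) hagree).symm, hf, ht, hagree⟩

theorem blt.apply_le_of_le_firstDiff (h : blt a b) {m : Fin N} (hm : (m : ℕ) ≤ firstDiff a b) :
    a m ≤ b m := by
  obtain ⟨i, hi, hf, ht, hagree⟩ := h.exists_firstDiff
  rcases hm.lt_or_eq with hlt | heq
  · exact (hagree m (by omega)).le
  · rw [Fin.ext (heq.trans hi.symm), hf]
    exact Bool.false_le _

theorem blt.apply_eq_of_firstDiff_eq (h : blt a b) {m : Fin N} (hm : firstDiff a b = m) :
    a m = false ∧ b m = true := by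
  obtain ⟨i, hi, hf, ht, -⟩ := h.exists_firstDiff
  rw [Fin.ext (hi.trans hm)] at hf ht
  exact ⟨hf, ht⟩

end FirstDiff

theorem firstDiff_ne_of_lt_of_forall_le {N : ℕ} (a : ℕ → Fin N → Bool) {m : Fin N} {i j : ℕ}
    (hij : i < j) (hchain : ∀ k, i ≤ k → k ≤ j → blt (a k) (a (k + 1)))
    (hmin : ∀ k, i ≤ k → k ≤ j → (m : ℕ) ≤ firstDiff (a k) (a (k + 1)))
    (hi : firstDiff (a i) (a (i + 1)) = m) : firstDiff (a j) (a (j + 1)) ≠ m := by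
  intro hj
  have hmono : MonotoneOn (fun k => a k m) (Set.Icc i j) := by
    refine monotoneOn_of_le_succ Set.ordConnected_Icc fun k _ hk _ => ?_
    rw [Order.succ_eq_add_one]
    exact (hchain k hk.1 hk.2).apply_le_of_le_firstDiff (hmin k hk.1 hk.2)
  have hup : a (i + 1) m ≤ a j m :=
    hmono (show i + 1 ∈ Set.Icc i j from ⟨by omega, hij⟩) ⟨hij.le, le_rfl⟩ (by omega)
  rw [((hchain i le_rfl hij.le).apply_eq_of_firstDiff_eq hi).2,
    ((hchain j hij.le le_rfl).apply_eq_of_firstDiff_eq hj).1] at hup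
  exact absurd hup (by decide)

/-- Property C: for `a_1 < ⋯ < a_r`, the minimum of the sequence
`δ_1, …, δ_{r-1}` (with `δ_i = δ(a_i,a_{i+1})`, indexed here from 0)
is achieved at a unique index. -/
theorem propertyC {N : ℕ} (r : ℕ) (hr : 2 ≤ r) (a : ℕ → Fin N → Bool)
    (hchain : ∀ i, i + 1 < r → blt (a i) (a (i + 1))) :
    ∃! i : ℕ, i + 1 < r ∧
      firstDiff (a i) (a (i + 1)) =
        sInf {d : ℕ | ∃ j, j + 1 < r ∧ d = firstDiff (a j) (a (j + 1))} := by
  set D := {d : ℕ | ∃ j, j + 1 < r ∧ d = firstDiff (a j) (a (j + 1))}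
  obtain ⟨i, hi, hiD⟩ := Nat.sInf_mem (s := D) ⟨_, 0, by omega, rfl⟩
  obtain ⟨m, hm, -⟩ := (hchain i hi).exists_firstDiff
  have hmin : ∀ k, k + 1 < r → (m : ℕ) ≤ firstDiff (a k) (a (k + 1)) :=
    fun k hk => hm ▸ hiD ▸ Nat.sInf_le ⟨k, hk, rfl⟩
  have hunique : ∀ j k, k + 1 < r → j < k →
      firstDiff (a j) (a (j + 1)) = m → firstDiff (a k) (a (k + 1)) ≠ m :=
    fun j k hk hjk => firstDiff_ne_of_lt_of_forall_le a hjk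
      (fun l _ hl => hchain l (by omega)) (fun l _ hl => hmin l (by omega))
  rw [hiD, ← hm]
  refine ⟨i, ⟨hi, hm.symm⟩, fun k ⟨hk, hkm⟩ => ?_⟩
  rcases lt_trichotomy k i with hlt | heq | hgt
  · exact absurd hm.symm (hunique k i hi hlt hkm)
  · exact heq
  · exact absurd hkm (hunique i k hk hgt hm.symm)
end

section
/- For every integer p ≥ 3 and n ≥ 2, f(n, p, p) ≥ n^{1/(p-2)} - 1, where f(n,p,q) = f_2(n,p,q) is the minimum number of colors in a (p,q)-coloring of the complete graph K_n. -/
/-- A `(p,q)`-coloring of the complete `k`-graph on `n` vertices. -/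
def IsPQColoring (k p q n : ℕ) (χ : Finset (Fin n) → ℕ) : Prop :=
  ∀ P : Finset (Fin n), P.card = p → q ≤ ((P.powersetCard k).image χ).card

/-- The Erdős–Gyárfás function `f_k(n,p,q)`. -/
noncomputable def egFun (k n p q : ℕ) : ℕ :=
  sInf {C : ℕ | ∃ χ : Finset (Fin n) → ℕ, (∀ e, χ e < C) ∧ IsPQColoring k p q n χ}


/-!
Fix a vertex `v`. In a `(p+1, p+1)`-colouring every colour class of the star at `v` carries a
`(p, p)`-colouring: a `p`-set `P` in the class together with `v` sees `p + 1` colours, and the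
edges from `v` to `P` contribute only one of them. By induction from `p = 2`, where such a set has
at most one point, a set carrying a `(p, p)`-colouring with `C` colours has at most
`1 + C (C + 1)^(p-3) = (C + 1)^(p-2)` points. Taking `C = f(n, p, p)` gives
`n ≤ (f(n, p, p) + 1)^(p-2)`.
-/

open Finset

variable {α : Type*} [DecidableEq α]

def IsPPColoringOn (χ : Finset α → ℕ) (p : ℕ) (S : Finset α) : Prop :=
  ∀ P ⊆ S, #P = p → p ≤ #((P.powersetCard 2).image χ)

namespace IsPPColoringOn

variable {χ : Finset α → ℕ} {p : ℕ} {S : Finset α}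

theorem card_le_one (h : IsPPColoringOn χ 2 S) : #S ≤ 1 := by
  by_contra! hS
  obtain ⟨a, ha, b, hb, hab⟩ := one_lt_card.mp hS
  have hpair : #{a, b} = 2 := card_pair hab
  have := h {a, b} (insert_subset ha (singleton_subset_iff.mpr hb)) hpair
  rw [← hpair, powersetCard_self, image_singleton, card_singleton, hpair] at this
  omega

theorem link (h : IsPPColoringOn χ (p + 1) S) {v : α} (hv : v ∈ S) (c : ℕ) :
    IsPPColoringOn χ p {u ∈ S.erase v | χ {v, u} = c} := by
  intro P hP hPcard
  have hPS : P ⊆ S.erase v := hP.trans (filter_subset _ _)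
  have hvP : v ∉ P := fun hv' => (mem_erase.mp (hPS hv')).1 rfl
  have hstar : ((P.powersetCard 1).image (insert v)).image χ ⊆ {c} := by
    intro x hx
    simp only [powersetCard_one, mem_image, mem_map] at hx
    obtain ⟨_, ⟨_, ⟨u, hu, rfl⟩, rfl⟩, rfl⟩ := hx
    exact mem_singleton.mpr (mem_filter.mp (hP hu)).2
  have hcolors := h (insert v P) (insert_subset hv (hPS.trans (erase_subset v S)))
    (by rw [card_insert_of_notMem hvP, hPcard])
  have hsplit : (insert v P).powersetCard 2 =
      P.powersetCard 2 ∪ (P.powersetCard 1).image (insert v) :=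
    powersetCard_succ_insert hvP 1
  rw [hsplit, image_union] at hcolors
  have := calc
    p + 1 ≤ _ := hcolors
    _ ≤ _ := card_union_le _ _
    _ ≤ #((P.powersetCard 2).image χ) + 1 := by grw [card_le_card hstar, card_singleton]
  omega

theorem card_le_pow {C : ℕ} (hχ : ∀ e, χ e < C) (hp : 2 ≤ p) (h : IsPPColoringOn χ p S) :
    #S ≤ (C + 1) ^ (p - 2) := by
  induction p, hp using Nat.le_induction generalizing S with
  | base => simpa using h.card_le_one
  | succ p hp ih =>
    obtain rfl | ⟨v, hv⟩ := S.eq_empty_or_nonempty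
    · simp
    have hstar : #(S.erase v) ≤ (C + 1) ^ (p - 2) * C := by
      simpa using card_le_mul_card_image_of_maps_to (f := fun u => χ {v, u}) (t := range C)
        (fun u _ => mem_range.mpr (hχ _)) _ (fun c _ => ih (h.link hv c))
    calc #S = #(S.erase v) + 1 := (card_erase_add_one hv).symm
      _ ≤ (C + 1) ^ (p - 2) * C + (C + 1) ^ (p - 2) := by
        gcongr
        exact Nat.one_le_pow _ _ C.succ_pos
      _ = (C + 1) ^ (p + 1 - 2) := by
        rw [show p + 1 - 2 = p - 2 + 1 by omega, pow_succ]
        ring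

end IsPPColoringOn

theorem isPQColoring_of_injective {n p : ℕ} {χ : Finset (Fin n) → ℕ} (hχ : χ.Injective)
    (hp : 3 ≤ p) : IsPQColoring 2 p p n χ := by
  intro P hP
  rw [card_image_of_injective _ hχ, card_powersetCard, hP, Nat.choose_two_right,
    Nat.le_div_iff_mul_le two_pos]
  exact Nat.mul_le_mul_left p (by omega)

theorem exists_isPQColoring_lt_egFun (n : ℕ) {p : ℕ} (hp : 3 ≤ p) :
    ∃ χ : Finset (Fin n) → ℕ, (∀ e, χ e < egFun 2 n p p) ∧ IsPQColoring 2 p p n χ :=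
  Nat.sInf_mem (s := {C | ∃ χ : Finset (Fin n) → ℕ, (∀ e, χ e < C) ∧ IsPQColoring 2 p p n χ})
    ⟨_, _, fun e => (Fintype.equivFin _ e).isLt,
      isPQColoring_of_injective (Fin.val_injective.comp (Fintype.equivFin _).injective) hp⟩

theorem rpow_one_div_sub_one_le {n C k : ℕ} (hk : k ≠ 0) (h : n ≤ (C + 1) ^ k) :
    (n : ℝ) ^ ((1 : ℝ) / k) - 1 ≤ C := by
  rw [one_div, sub_le_iff_le_add, Real.rpow_inv_le_iff_of_pos (by positivity) (by positivity)
    (by positivity), Real.rpow_natCast]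
  exact_mod_cast h

theorem egFun_pp_lower_general (p n : ℕ) (hp : 3 ≤ p) :
    (n : ℝ) ^ ((1 : ℝ) / ((p : ℝ) - 2)) - 1 ≤ (egFun 2 n p p : ℝ) := by
  obtain ⟨χ, hχ, hcol⟩ := exists_isPQColoring_lt_egFun n hp
  have hn : #(univ : Finset (Fin n)) ≤ (egFun 2 n p p + 1) ^ (p - 2) :=
    IsPPColoringOn.card_le_pow hχ (by omega) fun P _ => hcol P
  rw [card_univ, Fintype.card_fin] at hn
  have hp2 : ((p - 2 : ℕ) : ℝ) = p - 2 := by rw [Nat.cast_sub (by omega), Nat.cast_ofNat]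
  simpa only [hp2] using rpow_one_div_sub_one_le (by omega) hn

/-- Erdős–Gyárfás lower bound: `f(n,p,p) ≥ n^{1/(p-2)} - 1`. -/
theorem egFun_pp_lower (p n : ℕ) (hp : 3 ≤ p) (hn : 2 ≤ n) :
    (n : ℝ) ^ ((1 : ℝ) / ((p : ℝ) - 2)) - 1 ≤ (egFun 2 n p p : ℝ) :=
  egFun_pp_lower_general p n hp
end

section
/- Let χ_2 be an edge coloring of K_{N_2} that is a (3,2)-coloring (every triangle receives at least 2 colors), and define χ_3 on the complete 3-graph on V = {0,1}^{N_2} by χ_3(a_i,a_j,a_k) = (χ_2(δ_{ij}, δ_{jk}), sign) for a_i < a_j < a_k, where δ_{st} is the first differing coordinate and sign is 1 if δ_{ij} < δ_{jk} and -1 otherwise. Then χ_3 is a (4,2)-coloring: every 4 vertices span triples with at least 2 distinct χ_3-colors. -/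
/-- Mubayi's stepping-up coloring `χ₃` of triples `a < b < c`:
the `χ₂`-color of the edge `{δ(a,b), δ(b,c)}` together with the sign
recording whether `δ(a,b) < δ(b,c)`. -/
noncomputable def chi3 {N : ℕ} {α : Type*} (χ₂ : ℕ → ℕ → α)
    (a b c : Fin N → Bool) : α × ℤ :=
  (χ₂ (firstDiff a b) (firstDiff b c),
    if firstDiff a b < firstDiff b c then 1 else -1)

lemma firstDiff_eq {N : ℕ} {a b : Fin N → Bool} (i : Fin N)
    (hne : a i ≠ b i) (hagree : ∀ j, j < i → a j = b j) : firstDiff a b = i := by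
  have hmem : (i : ℕ) ∈ {k : ℕ | ∃ h : k < N, a ⟨k, h⟩ ≠ b ⟨k, h⟩} := ⟨i.isLt, hne⟩
  refine le_antisymm (Nat.sInf_le hmem) (le_csInf ⟨_, hmem⟩ ?_)
  rintro k ⟨hk, hne'⟩
  by_contra! hki
  exact hne' (hagree ⟨k, hk⟩ hki)

lemma blt.firstDiff_spec {N : ℕ} {a b : Fin N → Bool} (h : blt a b) :
    ∃ hlt : firstDiff a b < N,
      a ⟨firstDiff a b, hlt⟩ = false ∧ b ⟨firstDiff a b, hlt⟩ = true ∧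
      ∀ j : Fin N, (j : ℕ) < firstDiff a b → a j = b j := by
  obtain ⟨i, ha, hb, hagree⟩ := h
  rw [firstDiff_eq i (by simp [ha, hb]) hagree]
  exact ⟨i.isLt, ha, hb, hagree⟩

lemma firstDiff_ne_firstDiff {N : ℕ} {a b c : Fin N → Bool} (hab : blt a b) (hbc : blt b c) :
    firstDiff a b ≠ firstDiff b c := by
  obtain ⟨h₁, -, hb₁, -⟩ := hab.firstDiff_spec
  obtain ⟨h₂, hb₂, -, -⟩ := hbc.firstDiff_spec
  intro h
  have : b ⟨firstDiff a b, h₁⟩ = b ⟨firstDiff b c, h₂⟩ := congrArg b (Fin.ext h)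
  simp [hb₁, hb₂] at this

lemma firstDiff_eq_min {N : ℕ} {a b c : Fin N → Bool} (hab : blt a b) (hbc : blt b c) :
    firstDiff a c = min (firstDiff a b) (firstDiff b c) := by
  obtain ⟨h₁, ha₁, hb₁, hagree₁⟩ := hab.firstDiff_spec
  obtain ⟨h₂, hb₂, hc₂, hagree₂⟩ := hbc.firstDiff_spec
  rcases (firstDiff_ne_firstDiff hab hbc).lt_or_gt with hlt | hlt
  · rw [min_eq_left hlt.le]
    refine firstDiff_eq ⟨_, h₁⟩ ?_ fun j (hj : (j : ℕ) < _) => ?_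
    · simp [ha₁, ← hagree₂ ⟨_, h₁⟩ hlt, hb₁]
    · rw [hagree₁ j hj, hagree₂ j (hj.trans hlt)]
  · rw [min_eq_right hlt.le]
    refine firstDiff_eq ⟨_, h₂⟩ ?_ fun j (hj : (j : ℕ) < _) => ?_
    · simp [hagree₁ ⟨_, h₂⟩ hlt, hb₂, hc₂]
    · rw [hagree₁ j (hj.trans hlt), hagree₂ j hj]

lemma sign_lt_eq_sign_lt_iff {x y z : ℕ} :
    ((if x < y then 1 else -1 : ℤ) = if y < z then 1 else -1) ↔ (x < y ↔ y < z) := by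
  split_ifs <;> simp <;> omega

/-- If `χ₂` is a (3,2)-coloring (of edges on vertex set ℕ), then the
stepping-up coloring `χ₃` is a (4,2)-coloring: among any 4 vertices
`a₁ < a₂ < a₃ < a₄` of `{0,1}^{N₂}`, not all four triples get the same color. -/
theorem chi3_is_42_coloring {N : ℕ} {α : Type*} (χ₂ : ℕ → ℕ → α)
    (hsym : ∀ x y, χ₂ x y = χ₂ y x)
    (h32 : ∀ x y z : ℕ, x < y → y < z →
      ¬ (χ₂ x y = χ₂ x z ∧ χ₂ x y = χ₂ y z))
    (a₁ a₂ a₃ a₄ : Fin N → Bool)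
    (h12 : blt a₁ a₂) (h23 : blt a₂ a₃) (h34 : blt a₃ a₄) :
    ¬ (chi3 χ₂ a₁ a₂ a₃ = chi3 χ₂ a₁ a₂ a₄ ∧
       chi3 χ₂ a₁ a₂ a₃ = chi3 χ₂ a₁ a₃ a₄ ∧
       chi3 χ₂ a₁ a₂ a₃ = chi3 χ₂ a₂ a₃ a₄) := by
  rintro ⟨e124, e134, e234⟩
  simp only [chi3, firstDiff_eq_min h12 h23, firstDiff_eq_min h23 h34, Prod.mk.injEq]
    at e124 e134 e234
  simp only [sign_lt_eq_sign_lt_iff] at e234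
  set d₁ := firstDiff a₁ a₂
  set d₂ := firstDiff a₂ a₃
  set d₃ := firstDiff a₃ a₄
  have ne₁₂ : d₁ ≠ d₂ := firstDiff_ne_firstDiff h12 h23
  have ne₂₃ : d₂ ≠ d₃ := firstDiff_ne_firstDiff h23 h34
  rcases ne₁₂.lt_or_gt with lt₁₂ | lt₂₁
  · have lt₂₃ : d₂ < d₃ := e234.2.mp lt₁₂
    rw [min_eq_left lt₁₂.le] at e134
    exact h32 d₁ d₂ d₃ lt₁₂ lt₂₃ ⟨e134.1, e234.1⟩
  · have lt₃₂ : d₃ < d₂ :=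
      ne₂₃.symm.lt_of_le (not_lt.mp (e234.2.not.mp lt₂₁.not_gt))
    rw [min_eq_right lt₃₂.le] at e124
    refine h32 d₃ d₂ d₁ lt₃₂ lt₂₁ ⟨?_, ?_⟩
    · rw [hsym d₃ d₂, hsym d₃ d₁, ← e234.1, ← e124.1]
    · rw [hsym d₃ d₂, hsym d₂ d₁, ← e234.1]
end

section
/- For every k ≥ 3, the stepping-up coloring χ_k (defined recursively from χ_3 via the auxiliary map φ_{k-1}) is a (k+1,2)-coloring of the complete k-graph on {0,1}^{N_{k-1}}: for any k+1 vertices a_1 < ... < a_{k+1}, not all of the k-element edges among them receive the same color. -/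
open scoped Classical

/-- The auxiliary map `φ` on a sequence `d 0, …, d (m-1)`: it records `(I,0)`
(code 0) if increasing, `(D,0)` (code 1) if decreasing, and otherwise the
position `l` of the first local extremum together with its type:
`(A_l,0)` (code `3l`) for a local minimum, `(B_l,+)` (code `3l+1`) and
`(B_l,-)` (code `3l+2`) for a local maximum according to whether
`d (l-1) < d (l+1)` or `d (l-1) > d (l+1)`. -/
noncomputable def phiStep (m : ℕ) (d : ℕ → ℕ) : ℕ :=
  if ∀ i, i + 2 ≤ m → d i < d (i + 1) then 0
  else if ∀ i, i + 2 ≤ m → d (i + 1) < d i then 1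
  else
    let l := sInf {l : ℕ | 1 ≤ l ∧ l + 2 ≤ m ∧
      ((d (l - 1) < d l ∧ d (l + 1) < d l) ∨ (d l < d (l - 1) ∧ d l < d (l + 1)))}
    if d l < d (l - 1) then 3 * l
    else if d (l - 1) < d (l + 1) then 3 * l + 1
    else 3 * l + 2

/-- A selector of a `k`-element edge among the first `n` vertices:
a strictly increasing choice of `k` indices below `n`. -/
def IsEdgeSel (k n : ℕ) (σ : ℕ → ℕ) : Prop :=
  (∀ j, j + 1 < k → σ j < σ (j + 1)) ∧ ∀ j, j < k → σ j < n

/-- The stepping-up coloring `χ_k` of the `k`-edge selected by `σ` from the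
ordered vertices `a`: the `χ_{k-1}`-color of the set of first-difference
positions of consecutive vertices, paired with the `φ_{k-1}`-pattern. -/
noncomputable def stepColor {N : ℕ} {α : Type*} (χ : Finset ℕ → α) (k : ℕ)
    (a : ℕ → Fin N → Bool) (σ : ℕ → ℕ) : α × ℕ :=
  (χ ((Finset.range (k - 1)).image
      (fun j => firstDiff (a (σ j)) (a (σ (j + 1))))),
   phiStep (k - 1) (fun j => firstDiff (a (σ j)) (a (σ (j + 1)))))

/-!
Write `δ_i` for the first position where the consecutive vertices `a_i < a_{i+1}` differ.
Consecutive `δ`'s differ, and `a_i, a_{i+2}` first differ at `min δ_i δ_{i+1}`, so deleting a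
vertex merges two neighbouring `δ`'s into their minimum.

If `δ_0, …, δ_{k-1}` is monotone, a suitable vertex deletion removes any prescribed `δ_t` and
keeps the others, so the first coordinates of the `k`-edges run through `χ` of all
`(k-1)`-subsets of `{δ_i}`, which is not constant. Otherwise compare the edges without the
last and without the first vertex: `φ` records the first turning point and the initial
direction; passing to the shifted sequence moves a turning point at `L ≥ 2` to `L - 1`, while one
at `1` flips the initial direction.
-/

open Finset

section FirstDiff

variable {N : ℕ} {x y z : Fin N → Bool}

lemma firstDiff_eq_s12 (w : Fin N) (hw : x w ≠ y w) (hagree : ∀ j < w, x j = y j) :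
    firstDiff x y = w := by
  have hmem : (w : ℕ) ∈ {i : ℕ | ∃ h : i < N, x ⟨i, h⟩ ≠ y ⟨i, h⟩} := ⟨w.isLt, hw⟩
  refine le_antisymm (Nat.sInf_le hmem) (le_csInf ⟨w, hmem⟩ ?_)
  rintro i ⟨hi, hne⟩
  by_contra! hlt
  exact hne (hagree ⟨i, hi⟩ hlt)

lemma firstDiff_ne_of_blt (hxy : blt x y) (hyz : blt y z) :
    firstDiff x y ≠ firstDiff y z := by
  obtain ⟨w, hxw, hyw, hw⟩ := hxy
  obtain ⟨v, hyv, hzv, hv⟩ := hyz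
  rw [firstDiff_eq_s12 w (by simp [hxw, hyw]) hw, firstDiff_eq_s12 v (by simp [hyv, hzv]) hv]
  rintro hwv
  rw [Fin.val_injective hwv, hyv] at hyw
  exact Bool.false_ne_true hyw

lemma firstDiff_of_blt_of_blt (hxy : blt x y) (hyz : blt y z) :
    firstDiff x z = min (firstDiff x y) (firstDiff y z) := by
  have hne := firstDiff_ne_of_blt hxy hyz
  obtain ⟨w, hxw, hyw, hw⟩ := hxy
  obtain ⟨v, hyv, hzv, hv⟩ := hyz
  rw [firstDiff_eq_s12 w (by simp [hxw, hyw]) hw, firstDiff_eq_s12 v (by simp [hyv, hzv]) hv] at hne ⊢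
  rcases lt_or_gt_of_ne hne with hlt | hlt
  · rw [min_eq_left hlt.le]
    exact firstDiff_eq_s12 w (by simp [hxw, ← hv w hlt, hyw])
      (fun j hj => (hw j hj).trans (hv j (hj.trans hlt)))
  · rw [min_eq_right hlt.le]
    exact firstDiff_eq_s12 v (by simp [hw v hlt, hyv, hzv])
      (fun j hj => (hw j (hj.trans hlt)).trans (hv j hj))

end FirstDiff

def turningPoints (m : ℕ) (d : ℕ → ℕ) : Set ℕ :=
  {l : ℕ | 1 ≤ l ∧ l + 2 ≤ m ∧
    ((d (l - 1) < d l ∧ d (l + 1) < d l) ∨ (d l < d (l - 1) ∧ d l < d (l + 1)))}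

section TurningPoints

variable {m : ℕ} {d e : ℕ → ℕ}

lemma lt_succ_iff_of_forall_notMem_turningPoints (hne : ∀ i, i + 2 ≤ m → d i ≠ d (i + 1))
    {L : ℕ} (hL : ∀ l < L, l ∉ turningPoints m d) :
    ∀ i < L, i + 2 ≤ m → (d i < d (i + 1) ↔ d 0 < d 1) := by
  intro i
  induction i with
  | zero => simp
  | succ i ih =>
    intro hi him
    have hturn : ¬ ((d i < d (i + 1) ∧ d (i + 1 + 1) < d (i + 1)) ∨
        (d (i + 1) < d i ∧ d (i + 1) < d (i + 1 + 1))) :=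
      fun h => hL (i + 1) hi ⟨by omega, by omega, h⟩
    have := ih (by omega) (by omega)
    have := hne i (by omega)
    have := hne (i + 1) him
    omega

lemma phiStep_of_turningPoints_eq_empty (hm : 2 ≤ m) (hne : ∀ i, i + 2 ≤ m → d i ≠ d (i + 1))
    (h : turningPoints m d = ∅) : phiStep m d = if d 0 < d 1 then 0 else 1 := by
  have hdir := lt_succ_iff_of_forall_notMem_turningPoints hne (L := m) (by simp [h])
  unfold phiStep
  by_cases hup : d 0 < d 1
  · rw [if_pos fun i hi => (hdir i (by omega) hi).2 hup, if_pos hup]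
  · have hdown : ∀ i, i + 2 ≤ m → d (i + 1) < d i := fun i hi => by
      have := hdir i (by omega) hi
      have := hne i hi
      omega
    rw [if_neg fun hinc => hup (hinc 0 hm), if_pos hdown, if_neg hup]

lemma phiStep_of_turningPoints_nonempty (hne : ∀ i, i + 2 ≤ m → d i ≠ d (i + 1))
    (h : (turningPoints m d).Nonempty) :
    ∃ r < 3, phiStep m d = 3 * sInf (turningPoints m d) + r ∧ (r = 0 ↔ ¬ d 0 < d 1) := by
  set L := sInf (turningPoints m d)
  obtain ⟨hL1, hLm, hLturn⟩ : L ∈ turningPoints m d := Nat.sInf_mem h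
  have hdir := lt_succ_iff_of_forall_notMem_turningPoints hne
    (fun l hl => Nat.notMem_of_lt_sInf hl) (L - 1) (by omega) (by omega)
  rw [Nat.sub_add_cancel hL1] at hdir
  have hφ : phiStep m d =
      if d L < d (L - 1) then 3 * L
      else if d (L - 1) < d (L + 1) then 3 * L + 1 else 3 * L + 2 := by
    have hinc : ¬ ∀ i, i + 2 ≤ m → d i < d (i + 1) := fun hinc => by
      have := hinc (L - 1) (by omega)
      have := hinc L hLm
      rw [Nat.sub_add_cancel hL1] at *
      omega
    have hdec : ¬ ∀ i, i + 2 ≤ m → d (i + 1) < d i := fun hdec => by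
      have := hdec (L - 1) (by omega)
      have := hdec L hLm
      rw [Nat.sub_add_cancel hL1] at *
      omega
    unfold phiStep
    rw [if_neg hinc, if_neg hdec]
    rfl
  rw [hφ]
  split_ifs
  · exact ⟨0, by omega, rfl, by omega⟩
  · exact ⟨1, by omega, rfl, by omega⟩
  · exact ⟨2, by omega, rfl, by omega⟩

lemma sInf_turningPoints_eq_and_lt_iff_of_phiStep_eq (hm : 2 ≤ m)
    (hd : ∀ i, i + 2 ≤ m → d i ≠ d (i + 1)) (he : ∀ i, i + 2 ≤ m → e i ≠ e (i + 1))
    (h : phiStep m d = phiStep m e) :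
    sInf (turningPoints m d) = sInf (turningPoints m e) ∧ (d 0 < d 1 ↔ e 0 < e 1) := by
  have hpos : ∀ {f : ℕ → ℕ}, (turningPoints m f).Nonempty → 1 ≤ sInf (turningPoints m f) :=
    fun hf => (Nat.sInf_mem hf).1
  rcases (turningPoints m d).eq_empty_or_nonempty with hd₀ | hd₀ <;>
  rcases (turningPoints m e).eq_empty_or_nonempty with he₀ | he₀
  · have hφd := phiStep_of_turningPoints_eq_empty hm hd hd₀
    have hφe := phiStep_of_turningPoints_eq_empty hm he he₀
    rw [hd₀, he₀]
    split_ifs at hφd hφe <;> omega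
  · have hφd := phiStep_of_turningPoints_eq_empty hm hd hd₀
    obtain ⟨r, hr, hφe, hre⟩ := phiStep_of_turningPoints_nonempty he he₀
    have := hpos he₀
    split_ifs at hφd <;> omega
  · obtain ⟨r, hr, hφd, hrd⟩ := phiStep_of_turningPoints_nonempty hd hd₀
    have hφe := phiStep_of_turningPoints_eq_empty hm he he₀
    have := hpos hd₀
    split_ifs at hφe <;> omega
  · obtain ⟨r, hr, hφd, hrd⟩ := phiStep_of_turningPoints_nonempty hd hd₀
    obtain ⟨r', hr', hφe, hre⟩ := phiStep_of_turningPoints_nonempty he he₀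
    omega

lemma mem_turningPoints_shift {s : ℕ} :
    s ∈ turningPoints m (fun j => d (j + 1)) ↔ 1 ≤ s ∧ s + 1 ∈ turningPoints (m + 1) d := by
  cases s with
  | zero => simp [turningPoints]
  | succ s =>
    simp only [turningPoints, Set.mem_ofPred_eq, Nat.add_sub_cancel]
    omega

lemma turningPoints_mono {m' : ℕ} (h : m ≤ m') : turningPoints m d ⊆ turningPoints m' d :=
  fun _ ⟨h1, h2, h3⟩ => ⟨h1, h2.trans h, h3⟩

lemma strictMonoOn_or_strictAntiOn_of_turningPoints_eq_empty
    (hne : ∀ i, i + 2 ≤ m → d i ≠ d (i + 1)) (h : turningPoints m d = ∅) :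
    StrictMonoOn d (Set.Iio m) ∨ StrictAntiOn d (Set.Iio m) := by
  have hdir := lt_succ_iff_of_forall_notMem_turningPoints hne (L := m) (by simp [h])
  have hsub : Set.Iio m ⊆ Set.Iic (m - 1) := fun i hi => by
    rw [Set.mem_Iio] at hi
    rw [Set.mem_Iic]
    omega
  by_cases hup : d 0 < d 1
  · refine Or.inl ((strictMonoOn_Iic_of_lt_succ fun i hi => ?_).mono hsub)
    rw [Order.succ_eq_add_one]
    exact (hdir i (by omega) (by omega)).2 hup
  · refine Or.inr ((strictAntiOn_Iic_of_succ_lt fun i hi => ?_).mono hsub)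
    rw [Order.succ_eq_add_one]
    have := hdir i (by omega) (by omega)
    have := hne i (by omega)
    omega

lemma phiStep_shift_ne (hm : 2 ≤ m) (hne : ∀ i, i + 2 ≤ m + 1 → d i ≠ d (i + 1))
    (hturn : (turningPoints (m + 1) d).Nonempty) :
    phiStep m (fun j => d (j + 1)) ≠ phiStep m d := by
  intro h
  obtain ⟨hinf, hdir⟩ := sInf_turningPoints_eq_and_lt_iff_of_phiStep_eq hm
    (fun i _ => hne (i + 1) (by omega)) (fun i _ => hne i (by omega)) h
  set L := sInf (turningPoints (m + 1) d)
  have hLmem : L ∈ turningPoints (m + 1) d := Nat.sInf_mem hturn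
  have hL1 : 1 ≤ L := hLmem.1
  rcases Nat.lt_or_ge L 2 with hL | hL
  · have hLturn := hLmem.2.2
    rw [show L = 1 by omega] at hLturn
    norm_num at hLturn hdir
    omega
  · have htrunc : sInf (turningPoints m d) = 0 ∨ L ≤ sInf (turningPoints m d) := by
      rcases (turningPoints m d).eq_empty_or_nonempty with h₀ | h₀
      · exact Or.inl (by rw [h₀, Nat.sInf_empty])
      · exact Or.inr (Nat.sInf_le (turningPoints_mono m.le_succ (Nat.sInf_mem h₀)))
    have hshift : sInf (turningPoints m (fun j => d (j + 1))) = L - 1 := by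
      have hmem : L - 1 ∈ turningPoints m (fun j => d (j + 1)) :=
        mem_turningPoints_shift.2 ⟨by omega, by rwa [Nat.sub_add_cancel hL1]⟩
      refine le_antisymm (Nat.sInf_le hmem) (le_csInf ⟨_, hmem⟩ fun s hs => ?_)
      have := Nat.sInf_le (mem_turningPoints_shift.1 hs).2
      omega
    omega

end TurningPoints

lemma exists_erase_eq_of_mem_powersetCard {β : Type*} [DecidableEq β] {S e : Finset β}
    (hS : S.Nonempty) (he : e ∈ S.powersetCard (S.card - 1)) : ∃ x ∈ S, S.erase x = e := by
  rw [mem_powersetCard] at he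
  obtain ⟨x, hx, rfl⟩ := exists_eq_insert_iff.2 ⟨he.1, by have := hS.card_pos; omega⟩
  exact ⟨x, mem_insert_self x e, erase_insert hx⟩

def skipAt (t j : ℕ) : ℕ := if j < t then j else j + 1

lemma isEdgeSel_skipAt (k t : ℕ) : IsEdgeSel k (k + 1) (skipAt t) :=
  ⟨fun _ _ => by unfold skipAt; split_ifs <;> omega,
    fun _ _ => by unfold skipAt; split_ifs <;> omega⟩

lemma image_skipAt_range_eq_erase {k t : ℕ} {d : ℕ → ℕ} (hd : Set.InjOn d (Set.Iio k))
    (ht : t < k) :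
    (range (k - 1)).image (fun j => d (skipAt t j)) = ((range k).image d).erase (d t) := by
  ext x
  simp only [mem_image, mem_range, mem_erase]
  constructor
  · rintro ⟨j, hj, rfl⟩
    refine ⟨fun h => ?_, skipAt t j, by unfold skipAt; split_ifs <;> omega, rfl⟩
    have := hd (Set.mem_Iio.2 (by unfold skipAt; split_ifs <;> omega)) (Set.mem_Iio.2 ht) h
    unfold skipAt at this
    split_ifs at this <;> omega
  · rintro ⟨hx, i, hi, rfl⟩
    have hit : i ≠ t := fun h => hx (h ▸ rfl)
    refine ⟨if i < t then i else i - 1, by split_ifs <;> omega, ?_⟩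
    unfold skipAt
    split_ifs <;> first | rfl | (congr 1; omega)

section Delta

variable {N k : ℕ} {a : ℕ → Fin N → Bool}

noncomputable def delta (a : ℕ → Fin N → Bool) (σ : ℕ → ℕ) (j : ℕ) : ℕ :=
  firstDiff (a (σ j)) (a (σ (j + 1)))

lemma firstDiff_add_two (hchain : ∀ i < k, blt (a i) (a (i + 1))) {i : ℕ} (hi : i + 1 < k) :
    firstDiff (a i) (a (i + 1 + 1)) = min (delta a id i) (delta a id (i + 1)) :=
  firstDiff_of_blt_of_blt (hchain i (by omega)) (hchain (i + 1) hi)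

lemma delta_skipAt_of_strictMonoOn (hchain : ∀ i < k, blt (a i) (a (i + 1)))
    (hδ : StrictMonoOn (delta a id) (Set.Iio k)) {t j : ℕ} (hj : j + 1 < k) :
    delta a (skipAt t) j = delta a id (skipAt t j) := by
  rcases lt_or_ge (j + 1) t with h | h
  · simp only [delta, skipAt, id, if_pos h, if_pos (show j < t by omega)]
  rcases lt_or_ge j t with h' | h'
  · simp only [delta, skipAt, id, if_pos h', if_neg (show ¬ j + 1 < t by omega)]
    rw [firstDiff_add_two hchain hj, min_eq_left (hδ (Set.mem_Iio.2 (by omega))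
      (Set.mem_Iio.2 hj) (by omega)).le]
    rfl
  · simp only [delta, skipAt, id, if_neg (show ¬ j < t by omega),
      if_neg (show ¬ j + 1 < t by omega)]

lemma delta_skipAt_succ_of_strictAntiOn (hchain : ∀ i < k, blt (a i) (a (i + 1)))
    (hδ : StrictAntiOn (delta a id) (Set.Iio k)) {t j : ℕ} (hj : j + 1 < k) :
    delta a (skipAt (t + 1)) j = delta a id (skipAt t j) := by
  rcases lt_trichotomy j t with h | rfl | h
  · simp only [delta, skipAt, id, if_pos h, if_pos (show j < t + 1 by omega),
      if_pos (show j + 1 < t + 1 by omega)]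
  · simp only [delta, skipAt, id, lt_add_one, lt_irrefl, if_true, if_false]
    rw [firstDiff_add_two hchain hj, min_eq_right (hδ (Set.mem_Iio.2 (by omega))
      (Set.mem_Iio.2 hj) (by omega)).le]
    rfl
  · simp only [delta, skipAt, id, if_neg (show ¬ j < t by omega),
      if_neg (show ¬ j < t + 1 by omega), if_neg (show ¬ j + 1 < t + 1 by omega)]

end Delta

lemma exists_isEdgeSel_image_delta_eq_erase {N k t : ℕ} {a : ℕ → Fin N → Bool}
    (hchain : ∀ i < k, blt (a i) (a (i + 1)))
    (hδ : StrictMonoOn (delta a id) (Set.Iio k) ∨ StrictAntiOn (delta a id) (Set.Iio k))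
    (ht : t < k) :
    ∃ σ, IsEdgeSel k (k + 1) σ ∧
      (range (k - 1)).image (delta a σ) = ((range k).image (delta a id)).erase (delta a id t) := by
  rw [← image_skipAt_range_eq_erase (hδ.elim StrictMonoOn.injOn StrictAntiOn.injOn) ht]
  rcases hδ with hδ | hδ
  · refine ⟨skipAt t, isEdgeSel_skipAt k t, image_congr fun j hj => ?_⟩
    exact delta_skipAt_of_strictMonoOn hchain hδ (by rw [coe_range, Set.mem_Iio] at hj; omega)
  · refine ⟨skipAt (t + 1), isEdgeSel_skipAt k (t + 1), image_congr fun j hj => ?_⟩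
    exact delta_skipAt_succ_of_strictAntiOn hchain hδ (by rw [coe_range, Set.mem_Iio] at hj; omega)

section Coloring

variable {N : ℕ} {α : Type*} {k : ℕ} {χ : Finset ℕ → α} {a : ℕ → Fin N → Bool}

lemma exists_stepColor_ne_of_strictMonoOn_or_strictAntiOn (hk : 1 ≤ k)
    (hχ : ∀ S : Finset ℕ, S.card = k →
      ∃ e₁ ∈ S.powersetCard (k - 1), ∃ e₂ ∈ S.powersetCard (k - 1), χ e₁ ≠ χ e₂)
    (hchain : ∀ i < k, blt (a i) (a (i + 1)))
    (hδ : StrictMonoOn (delta a id) (Set.Iio k) ∨ StrictAntiOn (delta a id) (Set.Iio k)) :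
    ∃ σ₁ σ₂ : ℕ → ℕ, IsEdgeSel k (k + 1) σ₁ ∧ IsEdgeSel k (k + 1) σ₂ ∧
      stepColor χ k a σ₁ ≠ stepColor χ k a σ₂ := by
  set S := (range k).image (delta a id)
  have hS : S.card = k := by
    rw [card_image_of_injOn (coe_range k ▸ hδ.elim StrictMonoOn.injOn StrictAntiOn.injOn),
      card_range]
  have hSne : S.Nonempty := card_pos.1 (by omega)
  obtain ⟨e₁, he₁, e₂, he₂, hχe⟩ := hχ S hS
  rw [← hS] at he₁ he₂
  obtain ⟨x₁, hx₁, rfl⟩ := exists_erase_eq_of_mem_powersetCard hSne he₁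
  obtain ⟨x₂, hx₂, rfl⟩ := exists_erase_eq_of_mem_powersetCard hSne he₂
  obtain ⟨t₁, ht₁, rfl⟩ := mem_image.1 hx₁
  obtain ⟨t₂, ht₂, rfl⟩ := mem_image.1 hx₂
  obtain ⟨σ₁, hσ₁, h₁⟩ := exists_isEdgeSel_image_delta_eq_erase hchain hδ (mem_range.1 ht₁)
  obtain ⟨σ₂, hσ₂, h₂⟩ := exists_isEdgeSel_image_delta_eq_erase hchain hδ (mem_range.1 ht₂)
  exact ⟨σ₁, σ₂, hσ₁, hσ₂, fun h => hχe (by rw [← h₁, ← h₂]; exact congrArg Prod.fst h)⟩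

lemma exists_stepColor_ne_of_turningPoints_nonempty (hk : 3 ≤ k)
    (hne : ∀ i, i + 2 ≤ k → delta a id i ≠ delta a id (i + 1))
    (hturn : (turningPoints k (delta a id)).Nonempty) :
    ∃ σ₁ σ₂ : ℕ → ℕ, IsEdgeSel k (k + 1) σ₁ ∧ IsEdgeSel k (k + 1) σ₂ ∧
      stepColor χ k a σ₁ ≠ stepColor χ k a σ₂ := by
  obtain ⟨m, rfl⟩ : ∃ m, k = m + 1 := ⟨k - 1, by omega⟩
  refine ⟨(· + 1), id, ⟨fun _ _ => by simp, fun _ _ => by simp; omega⟩,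
    ⟨fun _ _ => by simp, fun _ _ => by simp; omega⟩, fun h => ?_⟩
  exact phiStep_shift_ne (by omega) hne hturn (congrArg Prod.snd h)

end Coloring

/-- If `χ_{k-1}` is a `(k,2)`-coloring of the complete `(k-1)`-graph (on vertex
set ℕ), then for `k ≥ 3` the stepping-up coloring `χ_k` is a `(k+1,2)`-coloring
of the complete `k`-graph on `{0,1}^{N_{k-1}}`: among any `k+1` vertices
`a_1 < ⋯ < a_{k+1}`, not all `k`-edges receive the same color. -/
theorem stepColor_is_kplus1_2_coloring {N : ℕ} {α : Type*} (k : ℕ) (hk : 3 ≤ k)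
    (χ : Finset ℕ → α)
    (hχ : ∀ S : Finset ℕ, S.card = k →
      ∃ e₁ ∈ S.powersetCard (k - 1), ∃ e₂ ∈ S.powersetCard (k - 1), χ e₁ ≠ χ e₂)
    (a : ℕ → Fin N → Bool)
    (hchain : ∀ i, i + 1 < k + 1 → blt (a i) (a (i + 1))) :
    ∃ σ₁ σ₂ : ℕ → ℕ, IsEdgeSel k (k + 1) σ₁ ∧ IsEdgeSel k (k + 1) σ₂ ∧
      stepColor χ k a σ₁ ≠ stepColor χ k a σ₂ := by
  replace hchain : ∀ i < k, blt (a i) (a (i + 1)) := fun i hi => hchain i (by omega)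
  have hne : ∀ i, i + 2 ≤ k → delta a id i ≠ delta a id (i + 1) := fun i hi =>
    firstDiff_ne_of_blt (hchain i (by omega)) (hchain (i + 1) (by omega))
  rcases (turningPoints k (delta a id)).eq_empty_or_nonempty with hflat | hturn
  · exact exists_stepColor_ne_of_strictMonoOn_or_strictAntiOn (by omega) hχ hchain
      (strictMonoOn_or_strictAntiOn_of_turningPoints_eq_empty hne hflat)
  · exact exists_stepColor_ne_of_turningPoints_nonempty hk hne hturn
end

section
/- For every k ≥ 4, the stepping-up coloring χ_k is a (k+2,3)-coloring of the complete k-graph on {0,1}^{N_{k-1}}: among any k+2 vertices, the k-element edges receive at least 3 distinct colors, assuming inductively that χ_{k-1} is both a (k+1,3)-coloring and a (k,2)-coloring. -/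
open scoped Classical

/-!
Write `d i = δ(a_i, a_{i+1})`. Along the chain `δ(a_i, a_j)` is the minimum of `d` over `[i, j)`,
and `δ(a_i, a_j) ≠ δ(a_j, a_l)` for `i < j < l`, so the colours are governed by `d`.
If `d` is monotone on `[0, k]`, all edges share one value of `φ` and their `δ`-sets run through
all `(k-1)`-subsets of the `k + 1` values of `d`: the `(k+1,3)` property of `χ_{k-1}` gives three
colours. Otherwise `φ` records the position and type of the first turn of a `δ`-sequence, and this
position moves by one between the three windows on the vertices `s, …, s + k - 1` (`s = 0, 1, 2`),
which therefore get different values of `φ`. The exceptions are a first turn of `d` at `k - 1`,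
where the `(k,2)` property on the monotone stretch `[0, k - 1]` supplies two colours besides that
of the last window, and a first turn at `1`, where the second turn of `d` takes over its role.
-/

section BinaryOrder

variable {N : ℕ}

theorem firstDiff_eq_s13 {x y : Fin N → Bool} (i : Fin N) (hx : x i = false) (hy : y i = true)
    (hlt : ∀ j, j < i → x j = y j) : firstDiff x y = i := by
  have hmem : (i : ℕ) ∈ {n : ℕ | ∃ h : n < N, x ⟨n, h⟩ ≠ y ⟨n, h⟩} := ⟨i.isLt, by simp [hx, hy]⟩
  refine le_antisymm (Nat.sInf_le hmem) (le_csInf ⟨_, hmem⟩ fun n ⟨hn, hne⟩ => ?_)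
  by_contra! h
  exact hne (hlt ⟨n, hn⟩ h)

theorem blt_trans_and_firstDiff {x y z : Fin N → Bool} (hxy : blt x y) (hyz : blt y z) :
    blt x z ∧ firstDiff x z = min (firstDiff x y) (firstDiff y z) ∧
      firstDiff x y ≠ firstDiff y z := by
  obtain ⟨i, hxi, hyi, hi⟩ := hxy
  obtain ⟨j, hyj, hzj, hj⟩ := hyz
  rw [firstDiff_eq_s13 i hxi hyi hi, firstDiff_eq_s13 j hyj hzj hj]
  have hij : i ≠ j := by rintro rfl; simp_all
  rcases lt_or_gt_of_ne hij with h | h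
  · have hxz : ∀ l, l < i → x l = z l := fun l hl => (hi l hl).trans (hj l (hl.trans h))
    have hzi : z i = true := by rw [← hj i h, hyi]
    refine ⟨⟨i, hxi, hzi, hxz⟩, ?_, by simpa [Fin.ext_iff] using hij⟩
    rw [firstDiff_eq_s13 i hxi hzi hxz, min_eq_left (by exact_mod_cast h.le)]
  · have hxz : ∀ l, l < j → x l = z l := fun l hl => (hi l (hl.trans h)).trans (hj l hl)
    have hxj : x j = false := by rw [hi j h, hyj]
    refine ⟨⟨j, hxj, hzj, hxz⟩, ?_, by simpa [Fin.ext_iff] using hij⟩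
    rw [firstDiff_eq_s13 j hxj hzj hxz, min_eq_right (by exact_mod_cast h.le)]

end BinaryOrder

def BltChain {N : ℕ} (a : ℕ → Fin N → Bool) (n : ℕ) : Prop :=
  ∀ i, i + 1 < n → blt (a i) (a (i + 1))

noncomputable def succDiff {N : ℕ} (a : ℕ → Fin N → Bool) (i : ℕ) : ℕ := firstDiff (a i) (a (i + 1))

/-- `δ(e)` for the edge `e` selected by `σ`. -/
noncomputable def edgeDelta {N : ℕ} (a : ℕ → Fin N → Bool) (σ : ℕ → ℕ) (j : ℕ) : ℕ :=
  firstDiff (a (σ j)) (a (σ (j + 1)))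

namespace BltChain

variable {N n : ℕ} {a : ℕ → Fin N → Bool} {i j t : ℕ}

theorem blt_of_lt (ha : BltChain a n) (hij : i < j) (hjn : j < n) : blt (a i) (a j) := by
  induction j, hij using Nat.le_induction with
  | base => exact ha i hjn
  | succ j hij ih => exact (blt_trans_and_firstDiff (ih (by omega)) (ha j hjn)).1

theorem firstDiff_eq_min (ha : BltChain a n) (hij : i < j) (hjt : j < t) (htn : t < n) :
    firstDiff (a i) (a t) = min (firstDiff (a i) (a j)) (firstDiff (a j) (a t)) :=
  (blt_trans_and_firstDiff (ha.blt_of_lt hij (by omega)) (ha.blt_of_lt hjt htn)).2.1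

theorem firstDiff_ne (ha : BltChain a n) (hij : i < j) (hjt : j < t) (htn : t < n) :
    firstDiff (a i) (a j) ≠ firstDiff (a j) (a t) :=
  (blt_trans_and_firstDiff (ha.blt_of_lt hij (by omega)) (ha.blt_of_lt hjt htn)).2.2

theorem succDiff_ne_succ (ha : BltChain a n) (hi : i + 2 < n) :
    succDiff a i ≠ succDiff a (i + 1) :=
  ha.firstDiff_ne (lt_add_one i) (lt_add_one (i + 1)) hi

theorem firstDiff_add_two (ha : BltChain a n) (hi : i + 2 < n) :
    firstDiff (a i) (a (i + 2)) = min (succDiff a i) (succDiff a (i + 1)) :=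
  ha.firstDiff_eq_min (lt_add_one i) (lt_add_one (i + 1)) hi

theorem firstDiff_add_two_of_lt (ha : BltChain a n) (hi : i + 2 < n)
    (h : succDiff a i < succDiff a (i + 1)) : firstDiff (a i) (a (i + 2)) = succDiff a i := by
  rw [ha.firstDiff_add_two hi, min_eq_left h.le]

theorem firstDiff_add_two_of_gt (ha : BltChain a n) (hi : i + 2 < n)
    (h : succDiff a (i + 1) < succDiff a i) :
    firstDiff (a i) (a (i + 2)) = succDiff a (i + 1) := by
  rw [ha.firstDiff_add_two hi, min_eq_right h.le]

theorem succDiff_ne_add_two_of_lt (ha : BltChain a n) (hi : i + 3 < n)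
    (hpeak : succDiff a (i + 2) < succDiff a (i + 1)) : succDiff a i ≠ succDiff a (i + 2) := by
  have h := ha.firstDiff_ne (lt_add_one i) (show i + 1 < i + 3 by omega) hi
  rwa [ha.firstDiff_add_two_of_gt (by omega) hpeak] at h

theorem firstDiff_eq_of_strictMonoOn (ha : BltChain a n) (hij : i < j) (hjn : j < n)
    (hmono : StrictMonoOn (succDiff a) (Set.Ico i j)) : firstDiff (a i) (a j) = succDiff a i := by
  induction j, hij using Nat.le_induction with
  | base => rfl
  | succ j hij ih =>
    rw [ha.firstDiff_eq_min hij (lt_add_one j) hjn,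
      ih (by omega) (hmono.mono (Set.Ico_subset_Ico_right (by omega))), min_eq_left]
    exact (hmono ⟨le_rfl, by omega⟩ ⟨by omega, lt_add_one j⟩ (by omega)).le

theorem firstDiff_eq_of_strictAntiOn (ha : BltChain a n) (hij : i < j) (hjn : j < n)
    (hanti : StrictAntiOn (succDiff a) (Set.Ico i j)) :
    firstDiff (a i) (a j) = succDiff a (j - 1) := by
  induction j, hij using Nat.le_induction with
  | base => rfl
  | succ j hij ih =>
    rw [ha.firstDiff_eq_min hij (lt_add_one j) hjn,
      ih (by omega) (hanti.mono (Set.Ico_subset_Ico_right (by omega))), min_eq_right,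
      Nat.add_sub_cancel]
    · rfl
    exact (hanti ⟨by omega, by omega⟩ ⟨by omega, lt_add_one j⟩ (by omega)).le

theorem edgeDelta_ne_succ {k : ℕ} {σ : ℕ → ℕ} (ha : BltChain a n) (hσ : IsEdgeSel k n σ)
    (hi : i + 2 < k) : edgeDelta a σ i ≠ edgeDelta a σ (i + 1) :=
  ha.firstDiff_ne (hσ.1 i (by omega)) (hσ.1 (i + 1) (by omega)) (hσ.2 (i + 2) hi)

end BltChain

section Phi

variable {m t r : ℕ} {e : ℕ → ℕ}

theorem phiStep_eq_zero (hinc : ∀ i, i + 2 ≤ m → e i < e (i + 1)) : phiStep m e = 0 :=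
  if_pos hinc

theorem phiStep_eq_one (hm : 3 ≤ m) (hdec : ∀ i, i + 2 ≤ m → e (i + 1) < e i) :
    phiStep m e = 1 := by
  have h0 := hdec 0 (by omega)
  rw [phiStep, if_neg fun hinc => (hinc 0 (by omega)).asymm h0, if_pos hdec]

theorem phiStep_eq_of_isLeast (hinc : ¬ ∀ i, i + 2 ≤ m → e i < e (i + 1))
    (hdec : ¬ ∀ i, i + 2 ≤ m → e (i + 1) < e i)
    (ht : IsLeast {l : ℕ | 1 ≤ l ∧ l + 2 ≤ m ∧
      ((e (l - 1) < e l ∧ e (l + 1) < e l) ∨ (e l < e (l - 1) ∧ e l < e (l + 1)))} t) :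
    phiStep m e = if e t < e (t - 1) then 3 * t
      else if e (t - 1) < e (t + 1) then 3 * t + 1 else 3 * t + 2 := by
  rw [phiStep, if_neg hinc, if_neg hdec]
  simp only [ht.csInf_eq]

theorem phiStep_eq_of_valley (ht : 1 ≤ t) (htm : t + 2 ≤ m) (hdec : ∀ i < t, e (i + 1) < e i)
    (hup : e t < e (t + 1)) : phiStep m e = 3 * t := by
  have hleft : e t < e (t - 1) := by simpa [Nat.sub_add_cancel ht] using hdec (t - 1) (by omega)
  rw [phiStep_eq_of_isLeast (fun h => (h 0 (by omega)).asymm (hdec 0 ht))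
    (fun h => (h t htm).asymm hup), if_pos hleft]
  refine ⟨⟨ht, htm, Or.inr ⟨hleft, hup⟩⟩, fun s ⟨hs, _, hturn⟩ => ?_⟩
  by_contra! hst
  have h1 := hdec s hst
  have h2 : e s < e (s - 1) := by simpa [Nat.sub_add_cancel hs] using hdec (s - 1) (by omega)
  omega

theorem phiStep_eq_of_peak (ht : 1 ≤ t) (htm : t + 2 ≤ m) (hinc : ∀ i < t, e i < e (i + 1))
    (hdown : e (t + 1) < e t) :
    phiStep m e = 3 * t + if e (t - 1) < e (t + 1) then 1 else 2 := by
  have hleft : e (t - 1) < e t := by simpa [Nat.sub_add_cancel ht] using hinc (t - 1) (by omega)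
  rw [phiStep_eq_of_isLeast (fun h => (h t htm).asymm hdown)
    (fun h => (h 0 (by omega)).asymm (hinc 0 ht)), if_neg hleft.asymm]
  · split_ifs <;> rfl
  refine ⟨⟨ht, htm, Or.inl ⟨hleft, hdown⟩⟩, fun s ⟨hs, _, hturn⟩ => ?_⟩
  by_contra! hst
  have h1 := hinc s hst
  have h2 : e (s - 1) < e s := by simpa [Nat.sub_add_cancel hs] using hinc (s - 1) (by omega)
  omega

theorem phiStep_eq_or_of_peak (ht : 1 ≤ t) (htm : t + 2 ≤ m) (hinc : ∀ i < t, e i < e (i + 1))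
    (hdown : e (t + 1) < e t) : phiStep m e = 3 * t + 1 ∨ phiStep m e = 3 * t + 2 := by
  rw [phiStep_eq_of_peak ht htm hinc hdown]
  split_ifs <;> simp

theorem exists_first_descent {β : Type*} [LinearOrder β] (f : ℕ → β) (L : ℕ) :
    (∀ i < L, f i < f (i + 1)) ∨ ∃ t < L, (∀ i < t, f i < f (i + 1)) ∧ f (t + 1) ≤ f t := by
  by_cases hinc : ∀ i < L, f i < f (i + 1)
  · exact .inl hinc
  push Not at hinc
  classical
  refine .inr ⟨Nat.find hinc, (Nat.find_spec hinc).1, fun i hi => ?_, (Nat.find_spec hinc).2⟩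
  have := Nat.find_min hinc hi
  push Not at this
  exact this (hi.trans (Nat.find_spec hinc).1)

theorem exists_first_ascent (f : ℕ → ℕ) (L : ℕ) :
    (∀ i < L, f (i + 1) < f i) ∨ ∃ t < L, (∀ i < t, f (i + 1) < f i) ∧ f t ≤ f (t + 1) :=
  exists_first_descent (β := ℕᵒᵈ) f L

theorem phiStep_of_increasing_prefix (hr : 1 ≤ r) (hne : ∀ i, i + 2 ≤ m → e i ≠ e (i + 1))
    (hinc : ∀ i < r, e i < e (i + 1)) :
    phiStep m e = 0 ∨ (3 * r < phiStep m e ∧ phiStep m e % 3 ≠ 0) := by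
  rcases exists_first_descent e (m - 1) with hall | ⟨t, htm, hpre, hdesc⟩
  · exact .inl (phiStep_eq_zero fun i hi => hall i (by omega))
  have hrt : r ≤ t := by
    by_contra! h
    exact (hinc t h).not_ge hdesc
  have hdown := lt_of_le_of_ne hdesc (hne t (by omega)).symm
  rcases phiStep_eq_or_of_peak (m := m) (by omega) (by omega) hpre hdown with h | h <;> omega

theorem phiStep_of_decreasing_prefix (hm : 3 ≤ m) (hr : 1 ≤ r)
    (hne : ∀ i, i + 2 ≤ m → e i ≠ e (i + 1)) (hdec : ∀ i < r, e (i + 1) < e i) :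
    phiStep m e = 1 ∨ (3 * r ≤ phiStep m e ∧ phiStep m e % 3 = 0) := by
  rcases exists_first_ascent e (m - 1) with hall | ⟨t, htm, hpre, hasc⟩
  · exact .inl (phiStep_eq_one hm fun i hi => hall i (by omega))
  have hrt : r ≤ t := by
    by_contra! h
    exact (hdec t h).not_ge hasc
  have hup := lt_of_le_of_ne hasc (hne t (by omega))
  rw [phiStep_eq_of_valley (by omega) (by omega) hpre hup]
  omega

end Phi

section Enumeration

theorem card_toFinset_ofPred_mem (S : Finset ℕ) (hf : (Set.ofPred (· ∈ S)).Finite) :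
    hf.toFinset.card = S.card := by
  congr 1; ext; simp [Set.ofPred]

theorem nth_mem_finset {S : Finset ℕ} {j : ℕ} (hj : j < S.card) : Nat.nth (· ∈ S) j ∈ S :=
  Nat.nth_mem_of_lt_card S.finite_toSet (by rwa [card_toFinset_ofPred_mem])

theorem nth_lt_nth_finset {S : Finset ℕ} {i j : ℕ} (hij : i < j) (hj : j < S.card) :
    Nat.nth (· ∈ S) i < Nat.nth (· ∈ S) j :=
  Nat.nth_lt_nth_of_lt_card S.finite_toSet hij (by rwa [card_toFinset_ofPred_mem])

theorem image_nth_range_card (S : Finset ℕ) :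
    (Finset.range S.card).image (Nat.nth (· ∈ S)) = S := by
  have h := Nat.image_nth_Iio_card (p := (· ∈ S)) S.finite_toSet
  rw [card_toFinset_ofPred_mem] at h
  apply Finset.coe_injective
  rw [Finset.coe_image, Finset.coe_range, h]
  rfl

theorem image_range_eq_image_of_eq_nth {β : Type*} [DecidableEq β] {S : Finset ℕ} {n : ℕ}
    (hn : S.card = n) {f g : ℕ → β} (h : ∀ j < n, f j = g (Nat.nth (· ∈ S) j)) :
    (Finset.range n).image f = S.image g := by
  subst hn
  conv_rhs => rw [← image_nth_range_card S]
  rw [Finset.image_image]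
  exact Finset.image_congr fun j hj => h j (by simpa using hj)

end Enumeration

def IsColoring {α : Type*} [DecidableEq α] (χ : Finset ℕ → α) (r p q : ℕ) : Prop :=
  ∀ S : Finset ℕ, S.card = p → q ≤ ((S.powersetCard r).image χ).card

def HasThreeColors {N : ℕ} {α : Type*} (χ : Finset ℕ → α) (k : ℕ) (a : ℕ → Fin N → Bool) :
    Prop :=
  ∃ σ₁ σ₂ σ₃ : ℕ → ℕ,
    IsEdgeSel k (k + 2) σ₁ ∧ IsEdgeSel k (k + 2) σ₂ ∧ IsEdgeSel k (k + 2) σ₃ ∧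
    stepColor χ k a σ₁ ≠ stepColor χ k a σ₂ ∧
    stepColor χ k a σ₁ ≠ stepColor χ k a σ₃ ∧
    stepColor χ k a σ₂ ≠ stepColor χ k a σ₃

/-- `φ` of the edge on the consecutive vertices `s, …, s + k - 1`, when `d = succDiff a`. -/
noncomputable def windowPhi (k : ℕ) (d : ℕ → ℕ) (s : ℕ) : ℕ := phiStep (k - 1) fun j => d (j + s)

/-- The edge on the vertices `S ∪ {B}`, for `S` below `B`. -/
noncomputable def snocSel (S : Finset ℕ) (B j : ℕ) : ℕ :=
  if j < S.card then Nat.nth (· ∈ S) j else B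

/-- The edge on the vertices `{A} ∪ (S + 1)`, for `S` above `A`; the shift makes its `δ`-sequence
read `succDiff a` on `S` along a decreasing stretch. -/
noncomputable def consSel (A : ℕ) (S : Finset ℕ) (j : ℕ) : ℕ :=
  if j = 0 then A else Nat.nth (· ∈ S) (j - 1) + 1

/-- The edge omitting the vertices `x < y`. -/
def skipSel (x y j : ℕ) : ℕ := if j < x then j else if j + 1 < y then j + 1 else j + 2

section Edges

variable {N : ℕ} {α : Type*} {χ : Finset ℕ → α} {k : ℕ} {a : ℕ → Fin N → Bool}

theorem stepColor_eq (σ : ℕ → ℕ) : stepColor χ k a σ =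
    (χ ((Finset.range (k - 1)).image (edgeDelta a σ)), phiStep (k - 1) (edgeDelta a σ)) :=
  rfl

theorem isEdgeSel_add_right {s : ℕ} (hs : s ≤ 2) : IsEdgeSel k (k + 2) (· + s) :=
  ⟨fun j _ => by simp only; omega, fun j _ => by simp only; omega⟩

theorem edgeDelta_add_right (s : ℕ) : edgeDelta a (· + s) = fun j => succDiff a (j + s) := by
  ext j
  simp only [edgeDelta, succDiff, add_right_comm]

theorem isEdgeSel_skipSel (x y : ℕ) : IsEdgeSel k (k + 2) (skipSel x y) :=
  ⟨fun j _ => by unfold skipSel; split_ifs <;> omega,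
    fun j _ => by unfold skipSel; split_ifs <;> omega⟩

theorem HasThreeColors.of_phiStep_ne {σ₁ σ₂ σ₃ : ℕ → ℕ} (h₁ : IsEdgeSel k (k + 2) σ₁)
    (h₂ : IsEdgeSel k (k + 2) σ₂) (h₃ : IsEdgeSel k (k + 2) σ₃)
    (h₁₂ : phiStep (k - 1) (edgeDelta a σ₁) ≠ phiStep (k - 1) (edgeDelta a σ₂))
    (h₁₃ : phiStep (k - 1) (edgeDelta a σ₁) ≠ phiStep (k - 1) (edgeDelta a σ₃))
    (h₂₃ : phiStep (k - 1) (edgeDelta a σ₂) ≠ phiStep (k - 1) (edgeDelta a σ₃)) :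
    HasThreeColors χ k a :=
  ⟨σ₁, σ₂, σ₃, h₁, h₂, h₃, fun h => h₁₂ (congrArg Prod.snd h),
    fun h => h₁₃ (congrArg Prod.snd h), fun h => h₂₃ (congrArg Prod.snd h)⟩

theorem phiStep_window (s : ℕ) :
    phiStep (k - 1) (edgeDelta a (· + s)) = windowPhi k (succDiff a) s := by
  rw [edgeDelta_add_right, windowPhi]

theorem HasThreeColors.of_windowPhi_nodup
    (h : [windowPhi k (succDiff a) 0, windowPhi k (succDiff a) 1,
      windowPhi k (succDiff a) 2].Nodup) :
    HasThreeColors χ k a := by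
  simp only [List.nodup_cons, List.mem_cons, List.not_mem_nil, or_false, List.nodup_nil,
    and_true] at h
  obtain ⟨h0, h1⟩ := h
  refine .of_phiStep_ne (isEdgeSel_add_right (s := 0) (by omega)) (isEdgeSel_add_right (s := 1)
    (by omega)) (isEdgeSel_add_right (s := 2) le_rfl) ?_ ?_ ?_ <;>
    simp only [phiStep_window] <;> tauto

theorem HasThreeColors.of_skipSel (x y : ℕ)
    (h₀₁ : windowPhi k (succDiff a) 0 ≠ windowPhi k (succDiff a) 1)
    (h₀ : windowPhi k (succDiff a) 0 ≠ phiStep (k - 1) (edgeDelta a (skipSel x y)))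
    (h₁ : windowPhi k (succDiff a) 1 ≠ phiStep (k - 1) (edgeDelta a (skipSel x y))) :
    HasThreeColors χ k a := by
  refine .of_phiStep_ne (isEdgeSel_add_right (s := 0) (by omega))
    (isEdgeSel_add_right (s := 1) (by omega)) (isEdgeSel_skipSel x y) ?_ ?_ ?_ <;>
    simpa only [phiStep_window]

end Edges

section Blocks

variable {N : ℕ} {α : Type*} {χ : Finset ℕ → α} {k : ℕ} {a : ℕ → Fin N → Bool}

theorem exists_edge_of_strictMonoOn (ha : BltChain a (k + 2)) {A B : ℕ} (hB : B < k + 2)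
    (hmono : StrictMonoOn (succDiff a) (Set.Ico A B)) {S : Finset ℕ} (hS : S ⊆ Finset.Ico A B)
    (hcard : S.card = k - 1) :
    ∃ σ, IsEdgeSel k (k + 2) σ ∧ stepColor χ k a σ = (χ (S.image (succDiff a)), 0) := by
  have hσ : ∀ j < k - 1, snocSel S B j = Nat.nth (· ∈ S) j := fun j hj => if_pos (by omega)
  have hσB : ∀ j, k - 1 ≤ j → snocSel S B j = B := fun j hj => if_neg (by omega)
  have hnth : ∀ j < k - 1, Nat.nth (· ∈ S) j ∈ Set.Ico A B := fun j hj => by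
    simpa using hS (nth_mem_finset (by omega))
  have hle : ∀ j < k, snocSel S B j ≤ B := fun j hj => by
    by_cases h : j < k - 1
    · exact hσ j h ▸ (hnth j h).2.le
    · exact (hσB j (by omega)).le
  have hlt : ∀ j, j + 1 < k → snocSel S B j < snocSel S B (j + 1) := fun j hj => by
    rw [hσ j (by omega)]
    by_cases h : j + 1 < k - 1
    · rw [hσ (j + 1) h]
      exact nth_lt_nth_finset (lt_add_one j) (by omega)
    · rw [hσB (j + 1) (by omega)]
      exact (hnth j (by omega)).2
  have hδ : ∀ j < k - 1, edgeDelta a (snocSel S B) j = succDiff a (Nat.nth (· ∈ S) j) :=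
    fun j hj => by
      have hA : A ≤ snocSel S B j := hσ j hj ▸ (hnth j hj).1
      rw [edgeDelta, ha.firstDiff_eq_of_strictMonoOn (hlt j (by omega))
        (by linarith [hle (j + 1) (by omega)])
        (hmono.mono (Set.Ico_subset_Ico hA (hle (j + 1) (by omega)))), hσ j hj]
  refine ⟨snocSel S B, ⟨hlt, fun j hj => by linarith [hle j hj]⟩, ?_⟩
  rw [stepColor_eq, image_range_eq_image_of_eq_nth hcard hδ, phiStep_eq_zero fun i hi => ?_]
  rw [hδ i (by omega), hδ (i + 1) (by omega)]
  exact hmono (hnth i (by omega)) (hnth (i + 1) (by omega))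
    (nth_lt_nth_finset (lt_add_one i) (by omega))

theorem exists_edge_of_strictAntiOn (ha : BltChain a (k + 2)) (hk : 4 ≤ k) {A B : ℕ}
    (hB : B < k + 2) (hanti : StrictAntiOn (succDiff a) (Set.Ico A B)) {S : Finset ℕ}
    (hS : S ⊆ Finset.Ico A B) (hcard : S.card = k - 1) :
    ∃ σ, IsEdgeSel k (k + 2) σ ∧ stepColor χ k a σ = (χ (S.image (succDiff a)), 1) := by
  have hσ₀ : consSel A S 0 = A := if_pos rfl
  have hσ : ∀ j, consSel A S (j + 1) = Nat.nth (· ∈ S) j + 1 := fun j => by simp [consSel]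
  have hnth : ∀ j < k - 1, Nat.nth (· ∈ S) j ∈ Set.Ico A B := fun j hj => by
    simpa using hS (nth_mem_finset (by omega))
  have hle : ∀ j < k, A ≤ consSel A S j ∧ consSel A S j ≤ B := fun j hj => by
    rcases j with _ | j
    · rw [hσ₀]
      exact ⟨le_rfl, (hnth 0 (by omega)).1.trans (hnth 0 (by omega)).2.le⟩
    · rw [hσ j]
      exact ⟨by linarith [(hnth j (by omega)).1], (hnth j (by omega)).2⟩
  have hlt : ∀ j, j + 1 < k → consSel A S j < consSel A S (j + 1) := fun j hj => by
    rw [hσ j]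
    rcases j with _ | j
    · rw [hσ₀]
      linarith [(hnth 0 (by omega)).1]
    · rw [hσ j, add_lt_add_iff_right]
      exact nth_lt_nth_finset (lt_add_one j) (by omega)
  have hδ : ∀ j < k - 1, edgeDelta a (consSel A S) j = succDiff a (Nat.nth (· ∈ S) j) :=
    fun j hj => by
      rw [edgeDelta, ha.firstDiff_eq_of_strictAntiOn (hlt j (by omega))
        (by linarith [(hle (j + 1) (by omega)).2])
        (hanti.mono (Set.Ico_subset_Ico (hle j (by omega)).1 (hle (j + 1) (by omega)).2)),
        hσ j, Nat.add_sub_cancel]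
  refine ⟨consSel A S, ⟨hlt, fun j hj => by linarith [(hle j hj).2]⟩, ?_⟩
  rw [stepColor_eq, image_range_eq_image_of_eq_nth hcard hδ,
    phiStep_eq_one (by omega) fun i hi => ?_]
  rw [hδ i (by omega), hδ (i + 1) (by omega)]
  exact hanti (hnth i (by omega)) (hnth (i + 1) (by omega))
    (nth_lt_nth_finset (lt_add_one i) (by omega))

end Blocks

section Families

variable {N : ℕ} {α : Type*} [DecidableEq α] {χ : Finset ℕ → α} {k : ℕ}
  {a : ℕ → Fin N → Bool}

theorem exists_subset_of_mem_image_powersetCard {d : ℕ → ℕ} {I : Finset ℕ} {r : ℕ} {c : α}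
    (hinj : Set.InjOn d I) (hc : c ∈ ((I.image d).powersetCard r).image χ) :
    ∃ S ⊆ I, S.card = r ∧ χ (S.image d) = c := by
  obtain ⟨T, hT, rfl⟩ := Finset.mem_image.mp hc
  obtain ⟨hTI, hTcard⟩ := Finset.mem_powersetCard.mp hT
  obtain ⟨S, hSI, rfl⟩ := Finset.subset_image_iff.mp hTI
  exact ⟨S, hSI, by rwa [Finset.card_image_of_injOn (hinj.mono hSI)] at hTcard, rfl⟩

theorem HasThreeColors.of_card_succ (hχ : IsColoring χ (k - 1) (k + 1) 3) {d : ℕ → ℕ}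
    {I : Finset ℕ} (hI : I.card = k + 1) (hinj : Set.InjOn d I) (φ₀ : ℕ)
    (hedge : ∀ S ⊆ I, S.card = k - 1 →
      ∃ σ, IsEdgeSel k (k + 2) σ ∧ stepColor χ k a σ = (χ (S.image d), φ₀)) :
    HasThreeColors χ k a := by
  have hcard := hχ (I.image d) (by rw [Finset.card_image_of_injOn hinj, hI])
  obtain ⟨c₁, hc₁, c₂, hc₂, c₃, hc₃, h₁₂, h₁₃, h₂₃⟩ := Finset.two_lt_card.mp hcard
  obtain ⟨S₁, hS₁, hcard₁, rfl⟩ := exists_subset_of_mem_image_powersetCard hinj hc₁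
  obtain ⟨S₂, hS₂, hcard₂, rfl⟩ := exists_subset_of_mem_image_powersetCard hinj hc₂
  obtain ⟨S₃, hS₃, hcard₃, rfl⟩ := exists_subset_of_mem_image_powersetCard hinj hc₃
  obtain ⟨σ₁, hσ₁, he₁⟩ := hedge S₁ hS₁ hcard₁
  obtain ⟨σ₂, hσ₂, he₂⟩ := hedge S₂ hS₂ hcard₂
  obtain ⟨σ₃, hσ₃, he₃⟩ := hedge S₃ hS₃ hcard₃
  refine ⟨σ₁, σ₂, σ₃, hσ₁, hσ₂, hσ₃, ?_, ?_, ?_⟩ <;>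
    simp only [he₁, he₂, he₃, ne_eq, Prod.mk.injEq, and_true] <;> assumption

theorem HasThreeColors.of_card (hχ : IsColoring χ (k - 1) k 2) {d : ℕ → ℕ} {I : Finset ℕ}
    (hI : I.card = k) (hinj : Set.InjOn d I) (φ₀ : ℕ)
    (hedge : ∀ S ⊆ I, S.card = k - 1 →
      ∃ σ, IsEdgeSel k (k + 2) σ ∧ stepColor χ k a σ = (χ (S.image d), φ₀))
    {σ : ℕ → ℕ} (hσ : IsEdgeSel k (k + 2) σ) (hφ : phiStep (k - 1) (edgeDelta a σ) ≠ φ₀) :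
    HasThreeColors χ k a := by
  have hcard := hχ (I.image d) (by rw [Finset.card_image_of_injOn hinj, hI])
  obtain ⟨c₁, hc₁, c₂, hc₂, h₁₂⟩ := Finset.one_lt_card.mp hcard
  obtain ⟨S₁, hS₁, hcard₁, rfl⟩ := exists_subset_of_mem_image_powersetCard hinj hc₁
  obtain ⟨S₂, hS₂, hcard₂, rfl⟩ := exists_subset_of_mem_image_powersetCard hinj hc₂
  obtain ⟨σ₁, hσ₁, he₁⟩ := hedge S₁ hS₁ hcard₁
  obtain ⟨σ₂, hσ₂, he₂⟩ := hedge S₂ hS₂ hcard₂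
  refine ⟨σ₁, σ₂, σ, hσ₁, hσ₂, hσ, ?_, ?_, ?_⟩ <;>
    simp only [he₁, he₂, stepColor_eq σ, ne_eq, Prod.mk.injEq, and_true, not_and] <;>
    first | assumption | exact fun _ => hφ.symm

end Families

theorem nodup_triple {β : Type*} {x y z : β} (hxy : x ≠ y) (hxz : x ≠ z) (hyz : y ≠ z) :
    [x, y, z].Nodup := by
  simp [hxy, hxz, hyz]

section Windows

variable {k t u : ℕ} {d : ℕ → ℕ}

theorem windowPhi_nodup_of_peak (hne : ∀ i < k, d i ≠ d (i + 1)) (ht : 2 ≤ t)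
    (htk : t + 2 ≤ k) (hinc : ∀ i < t, d i < d (i + 1)) (hdown : d (t + 1) < d t) :
    [windowPhi k d 0, windowPhi k d 1, windowPhi k d 2].Nodup := by
  obtain ⟨s, rfl⟩ : ∃ s, t = s + 2 := ⟨t - 2, by omega⟩
  have h₀ : windowPhi k d 0 = 0 ∨ (3 * (s + 2) < windowPhi k d 0 ∧ windowPhi k d 0 % 3 ≠ 0) :=
    phiStep_of_increasing_prefix (by omega) (fun i hi => hne i (by omega)) hinc
  have h₁ : windowPhi k d 1 = 3 * (s + 1) + 1 ∨ windowPhi k d 1 = 3 * (s + 1) + 2 :=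
    phiStep_eq_or_of_peak (by omega) (by omega) (fun i hi => hinc (i + 1) (by omega)) hdown
  rcases Nat.eq_zero_or_pos s with rfl | hs
  · have h₂ : windowPhi k d 2 = 1 ∨ (3 * 1 ≤ windowPhi k d 2 ∧ windowPhi k d 2 % 3 = 0) :=
      phiStep_of_decreasing_prefix (by omega) le_rfl (fun i hi => hne (i + 2) (by omega))
        (fun i hi => by rw [Nat.lt_one_iff.mp hi]; exact hdown)
    exact nodup_triple (by omega) (by omega) (by omega)
  · have h₂ : windowPhi k d 2 = 3 * s + 1 ∨ windowPhi k d 2 = 3 * s + 2 :=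
      phiStep_eq_or_of_peak hs (by omega) (fun i hi => hinc (i + 2) (by omega)) hdown
    exact nodup_triple (by omega) (by omega) (by omega)

theorem windowPhi_nodup_of_valley (hne : ∀ i < k, d i ≠ d (i + 1)) (ht : 2 ≤ t)
    (htk : t + 2 ≤ k) (hdec : ∀ i < t, d (i + 1) < d i) (hup : d t < d (t + 1)) :
    [windowPhi k d 0, windowPhi k d 1, windowPhi k d 2].Nodup := by
  obtain ⟨s, rfl⟩ : ∃ s, t = s + 2 := ⟨t - 2, by omega⟩
  have h₀ : windowPhi k d 0 = 1 ∨ (3 * (s + 2) ≤ windowPhi k d 0 ∧ windowPhi k d 0 % 3 = 0) :=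
    phiStep_of_decreasing_prefix (by omega) (by omega) (fun i hi => hne i (by omega)) hdec
  have h₁ : windowPhi k d 1 = 3 * (s + 1) :=
    phiStep_eq_of_valley (by omega) (by omega) (fun i hi => hdec (i + 1) (by omega)) hup
  rcases Nat.eq_zero_or_pos s with rfl | hs
  · have h₂ : windowPhi k d 2 = 0 ∨ (3 * 1 < windowPhi k d 2 ∧ windowPhi k d 2 % 3 ≠ 0) :=
      phiStep_of_increasing_prefix le_rfl (fun i hi => hne (i + 2) (by omega))
        (fun i hi => by rw [Nat.lt_one_iff.mp hi]; exact hup)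
    exact nodup_triple (by omega) (by omega) (by omega)
  · have h₂ : windowPhi k d 2 = 3 * s :=
      phiStep_eq_of_valley hs (by omega) (fun i hi => hdec (i + 2) (by omega)) hup
    exact nodup_triple (by omega) (by omega) (by omega)

theorem windowPhi_nodup_of_valley_one_of_peak (hne : ∀ i < k, d i ≠ d (i + 1))
    (hu : 2 ≤ u) (huk : u + 2 ≤ k) (hd : d 1 < d 0) (hinc : ∀ i < u, d (i + 1) < d (i + 2))
    (hdown : d (u + 2) < d (u + 1)) :
    [windowPhi k d 0, windowPhi k d 1, windowPhi k d 2].Nodup := by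
  obtain ⟨v, rfl⟩ : ∃ v, u = v + 1 := ⟨u - 1, by omega⟩
  have h₀ : windowPhi k d 0 = 3 * 1 :=
    phiStep_eq_of_valley le_rfl (by omega) (fun i hi => by rw [Nat.lt_one_iff.mp hi]; exact hd)
      (hinc 0 (by omega))
  have h₁ : windowPhi k d 1 = 0 ∨ (3 * (v + 1) < windowPhi k d 1 ∧ windowPhi k d 1 % 3 ≠ 0) :=
    phiStep_of_increasing_prefix (by omega) (fun i hi => hne (i + 1) (by omega)) hinc
  have h₂ : windowPhi k d 2 = 3 * v + 1 ∨ windowPhi k d 2 = 3 * v + 2 :=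
    phiStep_eq_or_of_peak (by omega) (by omega) (fun i hi => hinc (i + 1) (by omega)) hdown
  exact nodup_triple (by omega) (by omega) (by omega)

theorem windowPhi_nodup_of_peak_one_of_valley (hne : ∀ i < k, d i ≠ d (i + 1))
    (hu : 2 ≤ u) (huk : u + 2 ≤ k) (hd : d 0 < d 1) (hdec : ∀ i < u, d (i + 2) < d (i + 1))
    (hup : d (u + 1) < d (u + 2)) :
    [windowPhi k d 0, windowPhi k d 1, windowPhi k d 2].Nodup := by
  obtain ⟨v, rfl⟩ : ∃ v, u = v + 1 := ⟨u - 1, by omega⟩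
  have h₀ : windowPhi k d 0 = 3 * 1 + 1 ∨ windowPhi k d 0 = 3 * 1 + 2 :=
    phiStep_eq_or_of_peak le_rfl (by omega)
      (fun i hi => by rw [Nat.lt_one_iff.mp hi]; exact hd) (hdec 0 (by omega))
  have h₁ : windowPhi k d 1 = 1 ∨ (3 * (v + 1) ≤ windowPhi k d 1 ∧ windowPhi k d 1 % 3 = 0) :=
    phiStep_of_decreasing_prefix (by omega) (by omega) (fun i hi => hne (i + 1) (by omega)) hdec
  have h₂ : windowPhi k d 2 = 3 * v :=
    phiStep_eq_of_valley (by omega) (by omega) (fun i hi => hdec (i + 1) (by omega)) hup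
  exact nodup_triple (by omega) (by omega) (by omega)

end Windows

section Zigzag

variable {N : ℕ} {α : Type*} {χ : Finset ℕ → α} {k : ℕ} {a : ℕ → Fin N → Bool}

theorem HasThreeColors.of_valley_one_of_peak_two (ha : BltChain a (k + 2)) (hk : 4 ≤ k)
    (h₁₀ : succDiff a 1 < succDiff a 0) (h₁₂ : succDiff a 1 < succDiff a 2)
    (h₃₂ : succDiff a 3 < succDiff a 2) : HasThreeColors χ k a := by
  have hne : ∀ i < k, succDiff a i ≠ succDiff a (i + 1) := fun i hi =>
    ha.succDiff_ne_succ (by omega)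
  have h₀ : windowPhi k (succDiff a) 0 = 3 * 1 :=
    phiStep_eq_of_valley le_rfl (by omega)
      (fun i hi => by rw [Nat.lt_one_iff.mp hi]; exact h₁₀) h₁₂
  have h₁ : windowPhi k (succDiff a) 1 = 3 * 1 + 1 ∨ windowPhi k (succDiff a) 1 = 3 * 1 + 2 :=
    phiStep_eq_or_of_peak le_rfl (by omega)
      (fun i hi => by rw [Nat.lt_one_iff.mp hi]; exact h₁₂) h₃₂
  rcases (hne 3 (by omega)).symm.lt_or_gt with h₄₃ | h₃₄
  · have h₂ : windowPhi k (succDiff a) 2 = 1 ∨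
        (3 * 2 ≤ windowPhi k (succDiff a) 2 ∧ windowPhi k (succDiff a) 2 % 3 = 0) :=
      phiStep_of_decreasing_prefix (by omega) (by omega) (fun i hi => hne (i + 2) (by omega))
        (fun i hi => by interval_cases i <;> assumption)
    exact .of_windowPhi_nodup (nodup_triple (by omega) (by omega) (by omega))
  -- The last window may now have `φ = 3` as well; an edge skipping two vertices, chosen so that
  -- its `δ`-sequence starts with two monotone steps, replaces it.
  rcases (ha.succDiff_ne_add_two_of_lt (i := 1) (by omega) h₃₂).lt_or_gt with h₁₃ | h₃₁
  · have e₁ : edgeDelta a (skipSel 0 3) 1 = succDiff a 3 :=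
      ha.firstDiff_add_two_of_gt (i := 2) (by omega) h₃₂
    have hσ : phiStep (k - 1) (edgeDelta a (skipSel 0 3)) = 0 ∨
        (3 * 2 < phiStep (k - 1) (edgeDelta a (skipSel 0 3)) ∧
          phiStep (k - 1) (edgeDelta a (skipSel 0 3)) % 3 ≠ 0) :=
      phiStep_of_increasing_prefix (by omega)
        (fun i hi => ha.edgeDelta_ne_succ (isEdgeSel_skipSel 0 3) (by omega))
        (fun i hi => by interval_cases i <;> simp only [e₁] <;> assumption)
    exact .of_skipSel 0 3 (by omega) (by omega) (by omega)
  · have e₁ : edgeDelta a (skipSel 2 4) 1 = succDiff a 1 :=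
      ha.firstDiff_add_two_of_lt (i := 1) (by omega) h₁₂
    have e₂ : edgeDelta a (skipSel 2 4) 2 = succDiff a 3 :=
      ha.firstDiff_add_two_of_lt (i := 3) (by omega) h₃₄
    have hσ : phiStep (k - 1) (edgeDelta a (skipSel 2 4)) = 1 ∨
        (3 * 2 ≤ phiStep (k - 1) (edgeDelta a (skipSel 2 4)) ∧
          phiStep (k - 1) (edgeDelta a (skipSel 2 4)) % 3 = 0) :=
      phiStep_of_decreasing_prefix (by omega) (by omega)
        (fun i hi => ha.edgeDelta_ne_succ (isEdgeSel_skipSel 2 4) (by omega))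
        (fun i hi => by interval_cases i <;> simp only [e₁, e₂] <;> assumption)
    exact .of_skipSel 2 4 (by omega) (by omega) (by omega)

theorem HasThreeColors.of_peak_one_valley_two_peak_three (ha : BltChain a (k + 2)) (hk : 4 ≤ k)
    (h₀₁ : succDiff a 0 < succDiff a 1) (h₂₁ : succDiff a 2 < succDiff a 1)
    (h₂₃ : succDiff a 2 < succDiff a 3) (h₄₃ : succDiff a 4 < succDiff a 3) :
    HasThreeColors χ k a := by
  have h₀ : windowPhi k (succDiff a) 0 =
      3 * 1 + if succDiff a 0 < succDiff a 2 then 1 else 2 :=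
    phiStep_eq_of_peak le_rfl (by omega)
      (fun i hi => by rw [Nat.lt_one_iff.mp hi]; exact h₀₁) h₂₁
  have h₁ : windowPhi k (succDiff a) 1 = 3 * 1 :=
    phiStep_eq_of_valley le_rfl (by omega)
      (fun i hi => by rw [Nat.lt_one_iff.mp hi]; exact h₂₁) h₂₃
  have h₂ : windowPhi k (succDiff a) 2 =
      3 * 1 + if succDiff a 2 < succDiff a 4 then 1 else 2 :=
    phiStep_eq_of_peak le_rfl (by omega)
      (fun i hi => by rw [Nat.lt_one_iff.mp hi]; exact h₂₃) h₄₃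
  -- The first and last windows collide exactly when `h₀₂` and `h₂₄` agree; then an edge
  -- skipping two vertices, whose `δ`-sequence starts with two monotone steps, replaces the last.
  by_cases h₀₂ : succDiff a 0 < succDiff a 2 <;> by_cases h₂₄ : succDiff a 2 < succDiff a 4 <;>
    simp only [h₀₂, h₂₄, if_true, if_false] at h₀ h₂
  · have e₀ : edgeDelta a (skipSel 1 4) 0 = succDiff a 0 :=
      ha.firstDiff_add_two_of_lt (i := 0) (by omega) h₀₁
    have e₂ : edgeDelta a (skipSel 1 4) 2 = succDiff a 4 :=
      ha.firstDiff_add_two_of_gt (i := 3) (by omega) h₄₃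
    have hσ : phiStep (k - 1) (edgeDelta a (skipSel 1 4)) = 0 ∨
        (3 * 2 < phiStep (k - 1) (edgeDelta a (skipSel 1 4)) ∧
          phiStep (k - 1) (edgeDelta a (skipSel 1 4)) % 3 ≠ 0) :=
      phiStep_of_increasing_prefix (by omega)
        (fun i hi => ha.edgeDelta_ne_succ (isEdgeSel_skipSel 1 4) (by omega))
        (fun i hi => by interval_cases i <;> simp only [e₀, e₂] <;> assumption)
    exact .of_skipSel 1 4 (by omega) (by omega) (by omega)
  · exact .of_windowPhi_nodup (nodup_triple (by omega) (by omega) (by omega))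
  · exact .of_windowPhi_nodup (nodup_triple (by omega) (by omega) (by omega))
  · have h₄₂ : succDiff a 4 < succDiff a 2 :=
      lt_of_le_of_ne (not_lt.mp h₂₄) (ha.succDiff_ne_add_two_of_lt (i := 2) (by omega) h₄₃).symm
    have e₂ : edgeDelta a (skipSel 0 4) 2 = succDiff a 4 :=
      ha.firstDiff_add_two_of_gt (i := 3) (by omega) h₄₃
    have hσ : phiStep (k - 1) (edgeDelta a (skipSel 0 4)) = 1 ∨
        (3 * 2 ≤ phiStep (k - 1) (edgeDelta a (skipSel 0 4)) ∧
          phiStep (k - 1) (edgeDelta a (skipSel 0 4)) % 3 = 0) :=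
      phiStep_of_decreasing_prefix (by omega) (by omega)
        (fun i hi => ha.edgeDelta_ne_succ (isEdgeSel_skipSel 0 4) (by omega))
        (fun i hi => by interval_cases i; exacts [h₂₁, by rw [e₂]; exact h₄₂])
    exact .of_skipSel 0 4 (by omega) (by omega) (by omega)

theorem HasThreeColors.of_peak_one_of_valley_two (ha : BltChain a (k + 2)) (hk : 4 ≤ k)
    (h₀₁ : succDiff a 0 < succDiff a 1) (h₂₁ : succDiff a 2 < succDiff a 1)
    (h₂₃ : succDiff a 2 < succDiff a 3) : HasThreeColors χ k a := by
  have hne : ∀ i < k, succDiff a i ≠ succDiff a (i + 1) := fun i hi =>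
    ha.succDiff_ne_succ (by omega)
  rcases (hne 3 (by omega)).symm.lt_or_gt with h₄₃ | h₃₄
  · exact .of_peak_one_valley_two_peak_three ha hk h₀₁ h₂₁ h₂₃ h₄₃
  have h₀ : windowPhi k (succDiff a) 0 = 3 * 1 + 1 ∨ windowPhi k (succDiff a) 0 = 3 * 1 + 2 :=
    phiStep_eq_or_of_peak le_rfl (by omega)
      (fun i hi => by rw [Nat.lt_one_iff.mp hi]; exact h₀₁) h₂₁
  have h₁ : windowPhi k (succDiff a) 1 = 3 * 1 :=
    phiStep_eq_of_valley le_rfl (by omega)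
      (fun i hi => by rw [Nat.lt_one_iff.mp hi]; exact h₂₁) h₂₃
  have h₂ : windowPhi k (succDiff a) 2 = 0 ∨
      (3 * 2 < windowPhi k (succDiff a) 2 ∧ windowPhi k (succDiff a) 2 % 3 ≠ 0) :=
    phiStep_of_increasing_prefix (by omega) (fun i hi => hne (i + 2) (by omega))
      (fun i hi => by interval_cases i <;> assumption)
  exact .of_windowPhi_nodup (nodup_triple (by omega) (by omega) (by omega))

end Zigzag

section Cases

variable {N : ℕ} {α : Type*} [DecidableEq α] {χ : Finset ℕ → α} {k : ℕ}
  {a : ℕ → Fin N → Bool}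

theorem HasThreeColors.of_strictMonoOn (ha : BltChain a (k + 2))
    (hχ : IsColoring χ (k - 1) (k + 1) 3)
    (hmono : StrictMonoOn (succDiff a) (Set.Ico 0 (k + 1))) : HasThreeColors χ k a :=
  .of_card_succ hχ (I := Finset.Ico 0 (k + 1)) (by simp)
    (by simpa only [Finset.coe_Ico] using hmono.injOn) 0
    fun _ hS hcard => exists_edge_of_strictMonoOn ha (by omega) hmono hS hcard

theorem HasThreeColors.of_strictAntiOn (ha : BltChain a (k + 2)) (hk : 4 ≤ k)
    (hχ : IsColoring χ (k - 1) (k + 1) 3)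
    (hanti : StrictAntiOn (succDiff a) (Set.Ico 0 (k + 1))) : HasThreeColors χ k a :=
  .of_card_succ hχ (I := Finset.Ico 0 (k + 1)) (by simp)
    (by simpa only [Finset.coe_Ico] using hanti.injOn) 1
    fun _ hS hcard => exists_edge_of_strictAntiOn ha hk (by omega) hanti hS hcard

theorem HasThreeColors.of_peak_one (ha : BltChain a (k + 2)) (hχ : IsColoring χ (k - 1) k 2)
    (hk : 4 ≤ k) (h₀₁ : succDiff a 0 < succDiff a 1) (h₂₁ : succDiff a 2 < succDiff a 1) :
    HasThreeColors χ k a := by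
  have hne : ∀ i < k, succDiff a i ≠ succDiff a (i + 1) := fun i hi =>
    ha.succDiff_ne_succ (by omega)
  rcases exists_first_ascent (fun i => succDiff a (i + 1)) (k - 1) with
    hdec | ⟨u, huk, hdec, hasc⟩
  · have hanti : StrictAntiOn (succDiff a) (Set.Ico 1 (k + 1)) :=
      strictAntiOn_of_add_one_lt Set.ordConnected_Ico fun i _ ⟨hi, _⟩ ⟨_, hik⟩ => by
        obtain ⟨j, rfl⟩ : ∃ j, i = j + 1 := ⟨i - 1, by omega⟩
        exact hdec j (by omega)
    refine .of_card hχ (I := Finset.Ico 1 (k + 1)) (by simp)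
      (by simpa only [Finset.coe_Ico] using hanti.injOn) 1
      (fun _ hS hcard => exists_edge_of_strictAntiOn ha hk (by omega) hanti hS hcard)
      (isEdgeSel_add_right (s := 0) (by omega)) ?_
    have h₀ : windowPhi k (succDiff a) 0 = 3 * 1 + 1 ∨ windowPhi k (succDiff a) 0 = 3 * 1 + 2 :=
      phiStep_eq_or_of_peak le_rfl (by omega)
        (fun i hi => by rw [Nat.lt_one_iff.mp hi]; exact h₀₁) h₂₁
    rw [phiStep_window]
    omega
  have hup := lt_of_le_of_ne hasc (hne (u + 1) (by omega))
  rcases (show u = 0 ∨ u = 1 ∨ 2 ≤ u by omega) with rfl | rfl | hu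
  · exact absurd hup h₂₁.asymm
  · exact .of_peak_one_of_valley_two ha hk h₀₁ h₂₁ hup
  · exact .of_windowPhi_nodup
      (windowPhi_nodup_of_peak_one_of_valley hne hu (by omega) h₀₁ hdec hup)


theorem HasThreeColors.of_valley_one (ha : BltChain a (k + 2)) (hχ : IsColoring χ (k - 1) k 2)
    (hk : 4 ≤ k) (h₁₀ : succDiff a 1 < succDiff a 0) (h₁₂ : succDiff a 1 < succDiff a 2) :
    HasThreeColors χ k a := by
  have hne : ∀ i < k, succDiff a i ≠ succDiff a (i + 1) := fun i hi =>
    ha.succDiff_ne_succ (by omega)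
  rcases exists_first_descent (fun i => succDiff a (i + 1)) (k - 1) with
    hinc | ⟨u, huk, hinc, hdesc⟩
  · have hmono : StrictMonoOn (succDiff a) (Set.Ico 1 (k + 1)) :=
      strictMonoOn_of_lt_add_one Set.ordConnected_Ico fun i _ ⟨hi, _⟩ ⟨_, hik⟩ => by
        obtain ⟨j, rfl⟩ : ∃ j, i = j + 1 := ⟨i - 1, by omega⟩
        exact hinc j (by omega)
    refine .of_card hχ (I := Finset.Ico 1 (k + 1)) (by simp)
      (by simpa only [Finset.coe_Ico] using hmono.injOn) 0
      (fun _ hS hcard => exists_edge_of_strictMonoOn ha (by omega) hmono hS hcard)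
      (isEdgeSel_add_right (s := 0) (by omega)) ?_
    have h₀ : windowPhi k (succDiff a) 0 = 3 * 1 :=
      phiStep_eq_of_valley le_rfl (by omega)
        (fun i hi => by rw [Nat.lt_one_iff.mp hi]; exact h₁₀) h₁₂
    rw [phiStep_window, h₀]
    omega
  have hdown := lt_of_le_of_ne hdesc (hne (u + 1) (by omega)).symm
  rcases (show u = 0 ∨ u = 1 ∨ 2 ≤ u by omega) with rfl | rfl | hu
  · exact absurd hdown h₁₂.asymm
  · exact .of_valley_one_of_peak_two ha hk h₁₀ h₁₂ hdown
  · exact .of_windowPhi_nodup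
      (windowPhi_nodup_of_valley_one_of_peak hne hu (by omega) h₁₀ hinc hdown)

theorem HasThreeColors.of_first_peak (ha : BltChain a (k + 2)) (hχ : IsColoring χ (k - 1) k 2)
    (hk : 4 ≤ k) {t : ℕ} (ht : 1 ≤ t) (htk : t < k)
    (hinc : ∀ i < t, succDiff a i < succDiff a (i + 1))
    (hdown : succDiff a (t + 1) < succDiff a t) : HasThreeColors χ k a := by
  have hne : ∀ i < k, succDiff a i ≠ succDiff a (i + 1) := fun i hi =>
    ha.succDiff_ne_succ (by omega)
  rcases (show t = 1 ∨ (2 ≤ t ∧ t + 2 ≤ k) ∨ t + 1 = k by omega) with rfl | ⟨ht₂, htk₂⟩ | hlast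
  · exact .of_peak_one ha hχ hk (hinc 0 Nat.one_pos) hdown
  · exact .of_windowPhi_nodup (windowPhi_nodup_of_peak hne ht₂ htk₂ hinc hdown)
  have hmono : StrictMonoOn (succDiff a) (Set.Ico 0 k) :=
    strictMonoOn_of_lt_add_one Set.ordConnected_Ico fun i _ _ ⟨_, hik⟩ => hinc i (by omega)
  refine .of_card hχ (I := Finset.Ico 0 k) (by simp)
    (by simpa only [Finset.coe_Ico] using hmono.injOn) 0
    (fun _ hS hcard => exists_edge_of_strictMonoOn ha (by omega) hmono hS hcard)
    (isEdgeSel_add_right (s := 2) le_rfl) ?_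
  obtain ⟨v, rfl⟩ : ∃ v, t = v + 2 := ⟨t - 2, by omega⟩
  have h₂ : windowPhi k (succDiff a) 2 = 3 * v + 1 ∨ windowPhi k (succDiff a) 2 = 3 * v + 2 :=
    phiStep_eq_or_of_peak (by omega) (by omega) (fun i hi => hinc (i + 2) (by omega)) hdown
  rw [phiStep_window]
  omega

theorem HasThreeColors.of_first_valley (ha : BltChain a (k + 2))
    (hχ : IsColoring χ (k - 1) k 2) (hk : 4 ≤ k) {t : ℕ} (ht : 1 ≤ t) (htk : t < k)
    (hdec : ∀ i < t, succDiff a (i + 1) < succDiff a i)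
    (hup : succDiff a t < succDiff a (t + 1)) : HasThreeColors χ k a := by
  have hne : ∀ i < k, succDiff a i ≠ succDiff a (i + 1) := fun i hi =>
    ha.succDiff_ne_succ (by omega)
  rcases (show t = 1 ∨ (2 ≤ t ∧ t + 2 ≤ k) ∨ t + 1 = k by omega) with rfl | ⟨ht₂, htk₂⟩ | hlast
  · exact .of_valley_one ha hχ hk (hdec 0 Nat.one_pos) hup
  · exact .of_windowPhi_nodup (windowPhi_nodup_of_valley hne ht₂ htk₂ hdec hup)
  have hanti : StrictAntiOn (succDiff a) (Set.Ico 0 k) :=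
    strictAntiOn_of_add_one_lt Set.ordConnected_Ico fun i _ _ ⟨_, hik⟩ => hdec i (by omega)
  refine .of_card hχ (I := Finset.Ico 0 k) (by simp)
    (by simpa only [Finset.coe_Ico] using hanti.injOn) 1
    (fun _ hS hcard => exists_edge_of_strictAntiOn ha hk (by omega) hanti hS hcard)
    (isEdgeSel_add_right (s := 2) le_rfl) ?_
  obtain ⟨v, rfl⟩ : ∃ v, t = v + 2 := ⟨t - 2, by omega⟩
  have h₂ : windowPhi k (succDiff a) 2 = 3 * v :=
    phiStep_eq_of_valley (by omega) (by omega) (fun i hi => hdec (i + 2) (by omega)) hup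
  rw [phiStep_window, h₂]
  omega

end Cases

/-- If `χ_{k-1}` is both a `(k,2)`- and a `(k+1,3)`-coloring of the complete
`(k-1)`-graph on ℕ, then for `k ≥ 4` the stepping-up coloring `χ_k` is a
`(k+2,3)`-coloring: among any `k+2` vertices `a_1 < ⋯ < a_{k+2}` of
`{0,1}^{N_{k-1}}`, the `k`-edges receive at least 3 distinct colors. -/
theorem stepColor_is_kplus2_3_coloring {N : ℕ} {α : Type*} [DecidableEq α]
    (k : ℕ) (hk : 4 ≤ k) (χ : Finset ℕ → α)
    (hχ2 : ∀ S : Finset ℕ, S.card = k →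
      2 ≤ ((S.powersetCard (k - 1)).image χ).card)
    (hχ3 : ∀ S : Finset ℕ, S.card = k + 1 →
      3 ≤ ((S.powersetCard (k - 1)).image χ).card)
    (a : ℕ → Fin N → Bool)
    (hchain : ∀ i, i + 1 < k + 2 → blt (a i) (a (i + 1))) :
    ∃ σ₁ σ₂ σ₃ : ℕ → ℕ,
      IsEdgeSel k (k + 2) σ₁ ∧ IsEdgeSel k (k + 2) σ₂ ∧ IsEdgeSel k (k + 2) σ₃ ∧
      stepColor χ k a σ₁ ≠ stepColor χ k a σ₂ ∧
      stepColor χ k a σ₁ ≠ stepColor χ k a σ₃ ∧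
      stepColor χ k a σ₂ ≠ stepColor χ k a σ₃ := by
  have ha : BltChain a (k + 2) := hchain
  have hne : ∀ i < k, succDiff a i ≠ succDiff a (i + 1) := fun i hi =>
    ha.succDiff_ne_succ (by omega)
  show HasThreeColors χ k a
  rcases exists_first_descent (succDiff a) k with hinc | ⟨t, htk, hinc, hdesc⟩
  · exact .of_strictMonoOn ha hχ3
      (strictMonoOn_of_lt_add_one Set.ordConnected_Ico fun i _ _ ⟨_, hik⟩ => hinc i (by omega))
  have hdown := lt_of_le_of_ne hdesc (hne t htk).symm
  rcases Nat.eq_zero_or_pos t with rfl | ht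
  · rcases exists_first_ascent (succDiff a) k with hdec | ⟨t, htk, hdec, hasc⟩
    · exact .of_strictAntiOn ha hk hχ3
        (strictAntiOn_of_add_one_lt Set.ordConnected_Ico fun i _ _ ⟨_, hik⟩ => hdec i (by omega))
    have ht : 1 ≤ t := Nat.one_le_iff_ne_zero.mpr fun h => by subst h; exact hasc.not_gt hdown
    exact .of_first_valley ha hχ2 hk ht htk hdec (lt_of_le_of_ne hasc (hne t htk))
  · exact .of_first_peak ha hχ2 hk ht htk hinc hdown
end

section
/- Let χ_2 be Mubayi's coloring of K_{N_2} with N_2 = C(m,t): vertices are t-element subsets of [m] (identified with characteristic vectors ordered as binary integers), and for S < T, χ_2(ST) = (c_1, c_2, c_3, c_4) where c_1 is the first index where S has 0 and T has 1, c_2 is the first index after c_1 where S has 1 and T has 0, c_3 = f_S(S∩T), c_4 = f_T(S∩T) for fixed bijections f_B: 2^B → [2^t]. Then χ_2 is a (3,2)-coloring: every triangle receives at least 2 colors. -/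
/-! The first coordinate alone forbids a monochromatic triangle `S < T < U`: position
`c₁(S,T)` belongs to `T`, whereas position `c₁(T,U)` does not, so `χ₂(ST) ≠ χ₂(TU)`. -/

/-- The binary order on subsets of `[m]` (as characteristic vectors):
`S < T` iff at the first position where they differ, `S` has `0` and `T` has `1`. -/
def sLT {m : ℕ} (S T : Finset (Fin m)) : Prop :=
  ∃ i : Fin m, i ∉ S ∧ i ∈ T ∧ ∀ j, j < i → (j ∈ S ↔ j ∈ T)

/-- `c₁(S,T)`: the minimum position `i` with `i ∉ S` and `i ∈ T`. -/
noncomputable def c1 {m : ℕ} (S T : Finset (Fin m)) : ℕ :=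
  sInf {i : ℕ | ∃ h : i < m, (⟨i, h⟩ : Fin m) ∉ S ∧ (⟨i, h⟩ : Fin m) ∈ T}

/-- `c₂(S,T)`: the minimum position `j > c₁(S,T)` with `j ∈ S` and `j ∉ T`. -/
noncomputable def c2 {m : ℕ} (S T : Finset (Fin m)) : ℕ :=
  sInf {j : ℕ | c1 S T < j ∧ ∃ h : j < m, (⟨j, h⟩ : Fin m) ∈ S ∧ (⟨j, h⟩ : Fin m) ∉ T}

/-- Mubayi's coloring `χ₂(ST) = (c₁, c₂, f_S(S ∩ T), f_T(S ∩ T))`. -/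
noncomputable def mubayiChi2 {m : ℕ} (f : Finset (Fin m) → Finset (Fin m) → ℕ)
    (S T : Finset (Fin m)) : ℕ × ℕ × ℕ × ℕ :=
  (c1 S T, c2 S T, f S (S ∩ T), f T (S ∩ T))

theorem sLT.sdiff_nonempty {m : ℕ} {S T : Finset (Fin m)} (h : sLT S T) : (T \ S).Nonempty :=
  let ⟨i, hiS, hiT, _⟩ := h
  ⟨i, Finset.mem_sdiff.2 ⟨hiT, hiS⟩⟩

theorem c1_spec {m : ℕ} {S T : Finset (Fin m)} (h : (T \ S).Nonempty) :
    ∃ i : Fin m, (i : ℕ) = c1 S T ∧ i ∉ S ∧ i ∈ T := by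
  obtain ⟨i, hi⟩ := h
  rw [Finset.mem_sdiff] at hi
  have hne : {n : ℕ | ∃ h : n < m, (⟨n, h⟩ : Fin m) ∉ S ∧ ⟨n, h⟩ ∈ T}.Nonempty :=
    ⟨i, i.isLt, hi.2, hi.1⟩
  obtain ⟨hlt, hS, hT⟩ := Nat.sInf_mem hne
  exact ⟨⟨c1 S T, hlt⟩, rfl, hS, hT⟩

theorem c1_ne_c1 {m : ℕ} {S T U : Finset (Fin m)} (hST : (T \ S).Nonempty)
    (hTU : (U \ T).Nonempty) : c1 S T ≠ c1 T U := by
  intro heq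
  obtain ⟨i, hi, -, hiT⟩ := c1_spec hST
  obtain ⟨j, hj, hjT, -⟩ := c1_spec hTU
  exact hjT (Fin.ext (hj.trans (hi.trans heq).symm) ▸ hiT)

theorem mubayiChi2_is_32_coloring_general (m : ℕ)
    (f : Finset (Fin m) → Finset (Fin m) → ℕ)
    (S T U : Finset (Fin m))
    (hST : sLT S T) (hTU : sLT T U) :
    ¬ (mubayiChi2 f S T = mubayiChi2 f S U ∧
       mubayiChi2 f S T = mubayiChi2 f T U) := by
  rintro ⟨-, hSTU⟩
  exact c1_ne_c1 hST.sdiff_nonempty hTU.sdiff_nonempty (congrArg Prod.fst hSTU)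

/-- Mubayi's coloring `χ₂` is a (3,2)-coloring of `K_{N₂}` (`N₂ = C(m,t)`):
every triangle `S < T < U` on `t`-subsets of `[m]` receives at least 2 colors. -/
theorem mubayiChi2_is_32_coloring (m t : ℕ)
    (f : Finset (Fin m) → Finset (Fin m) → ℕ)
    (hf : ∀ B : Finset (Fin m), B.card = t →
      Set.BijOn (f B) (B.powerset : Set (Finset (Fin m))) (Set.Icc 1 (2 ^ t)))
    (S T U : Finset (Fin m))
    (hS : S.card = t) (hT : T.card = t) (hU : U.card = t)
    (hST : sLT S T) (hTU : sLT T U) :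
    ¬ (mubayiChi2 f S T = mubayiChi2 f S U ∧
       mubayiChi2 f S T = mubayiChi2 f T U) :=
  mubayiChi2_is_32_coloring_general m f S T U hST hTU
end
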